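/- arXiv:1605.07272 — 6 statements merged into one kernel-verified Lean document; each statement's English description precedes it below -/
import Mathlib

section
/- Suppose x ∈ ℝ^d satisfies ‖x‖_∞ ≤ 2μ/√d and the second-order condition for the full-observation objective, namely for every v ∈ ℝ^d, ‖vxᵀ + xvᵀ‖_F² ≥ 2vᵀ(zzᵀ − xxᵀ)v. Then ‖x‖₂² ≥ 1/3. -/
open Matrix Finset

noncomputable section

/-- Euclidean norm of a finite real vector. -/
def vnorm {n : ℕ} (x : Fin n → ℝ) : ℝ := Real.sqrt (∑ i, (x i) ^ 2)

/-- Frobenius norm of a matrix. -/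
def frobNorm {m n : ℕ} (A : Matrix (Fin m) (Fin n) ℝ) : ℝ :=
  Real.sqrt (∑ i, ∑ j, (A i j) ^ 2)

/-- Outer product of two vectors, as a matrix. -/
def outer {n : ℕ} (x y : Fin n → ℝ) : Matrix (Fin n) (Fin n) ℝ := fun i j => x i * y j

lemma dsum {d : ℕ} (f g : Fin d → ℝ) :
    ∑ i, ∑ j, f i * g j = (∑ i, f i) * (∑ j, g j) := by
  rw [Finset.sum_mul_sum]

/-- if `x` is incoherent and satisfies the second-order condition of the
full-observation objective (`‖vxᵀ + xvᵀ‖_F² ≥ 2vᵀ(zzᵀ − xxᵀ)v` for all `v`),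
then `‖x‖₂² ≥ 1/3`. -/
theorem stmt3 (d : ℕ) (hd : 0 < d) (μ : ℝ) (hμ : 0 < μ) (z x : Fin d → ℝ)
    (hz : vnorm z = 1) (hzinf : ∀ i, |z i| ≤ μ / Real.sqrt d)
    (hxinf : ∀ i, |x i| ≤ 2 * μ / Real.sqrt d)
    (hsoc : ∀ v : Fin d → ℝ,
      frobNorm (outer v x + outer x v) ^ 2 ≥
        2 * (v ⬝ᵥ (outer z z - outer x x).mulVec v)) :
    vnorm x ^ 2 ≥ 1 / 3 := by
  set S : ℝ := ∑ i, (z i) ^ 2 with hS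
  set T : ℝ := ∑ i, (x i) ^ 2 with hT
  set P : ℝ := ∑ i, x i * z i with hP
  have hSnn : 0 ≤ S := Finset.sum_nonneg fun i _ => sq_nonneg _
  have hTnn : 0 ≤ T := Finset.sum_nonneg fun i _ => sq_nonneg _
  have hS1 : S = 1 := by
    have h := Real.sq_sqrt hSnn
    rw [show Real.sqrt S = 1 from hz] at h
    linarith [h]
  have hvx : vnorm x ^ 2 = T := Real.sq_sqrt hTnn
  rw [hvx]
  have hCS : P ^ 2 ≤ T * S := Finset.sum_mul_sq_le_sq_mul_sq Finset.univ x z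
  have hkey := hsoc z
  have hfr : frobNorm (outer z x + outer x z) ^ 2 = 2 * S * T + 2 * P ^ 2 := by
    have hnn : (0:ℝ) ≤ ∑ i, ∑ j, ((outer z x + outer x z) i j) ^ 2 :=
      Finset.sum_nonneg fun i _ => Finset.sum_nonneg fun j _ => sq_nonneg _
    rw [frobNorm, Real.sq_sqrt hnn]
    have he : ∀ i ∈ Finset.univ, ∑ j, ((outer z x + outer x z) i j) ^ 2
        = ∑ j, ((z i ^ 2) * (x j ^ 2) + (2 * (x i * z i)) * (x j * z j)
            + (x i ^ 2) * (z j ^ 2)) := by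
      intro i _
      apply Finset.sum_congr rfl
      intro j _
      simp only [outer, Matrix.add_apply]
      ring
    rw [Finset.sum_congr rfl he]
    simp only [Finset.sum_add_distrib]
    rw [dsum (fun i => z i ^ 2) (fun j => x j ^ 2),
        dsum (fun i => 2 * (x i * z i)) (fun j => x j * z j),
        dsum (fun i => x i ^ 2) (fun j => z j ^ 2)]
    have h2 : ∑ i, 2 * (x i * z i) = 2 * P := by rw [hP, Finset.mul_sum]
    rw [h2, ← hS, ← hT, ← hP]
    ring
  have hrhs : z ⬝ᵥ (outer z z - outer x x).mulVec z = S * S - P * P := by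
    have : z ⬝ᵥ (outer z z - outer x x).mulVec z
        = ∑ i, ∑ j, ((z i * z i) * (z j * z j) - (x i * z i) * (x j * z j)) := by
      simp only [dotProduct, Matrix.mulVec, dotProduct, Matrix.sub_apply, outer,
        Finset.mul_sum]
      apply Finset.sum_congr rfl
      intro i _
      apply Finset.sum_congr rfl
      intro j _
      ring
    rw [this]
    simp only [Finset.sum_sub_distrib]
    rw [dsum (fun i => z i * z i) (fun j => z j * z j),
        dsum (fun i => x i * z i) (fun j => x j * z j)]
    rw [← hP]
    congr 1
    · congr 1 <;> (rw [hS]; apply Finset.sum_congr rfl; intro i _; ring)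
  rw [hfr, hrhs, hS1] at hkey
  nlinarith [hkey, hCS]
end
end

section
/- There exists an absolute constant c such that if p ≥ c·μ⁶·log^{1.5}(d)/d, then with probability at least 1 − 1/d over the random choice of Ω the following holds: every x ∈ B = {x ∈ ℝ^d : ‖x‖_∞ ≤ 2μ/√d, ‖x‖₂ ≤ 1} satisfying the second-order optimality condition (for all v ∈ ℝ^d, ‖P_Ω(vxᵀ + xvᵀ)‖_F² ≥ 2vᵀP_Ω(zzᵀ − xxᵀ)v) satisfies ‖x‖₂² ≥ 1/4. -/
open Matrix Finset MeasureTheory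

noncomputable section

/-- `P_Ω`: the sample `ω` assigns a Boolean to each (ordered) pair; the entry `(i,j)`
is observed iff the Boolean attached to the unordered pair `{i,j}` (encoded as
`(min i j, max i j)`) is `true`.  This makes the observed set symmetric, with each
unordered pair included independently. -/
def projO {d : ℕ} (ω : Fin d × Fin d → Bool) (A : Matrix (Fin d) (Fin d) ℝ) :
    Matrix (Fin d) (Fin d) ℝ :=
  fun i j => if ω (min i j, max i j) then A i j else 0

/-- Gradient of the regularizer `R(x) = ∑ᵢ (|xᵢ| − α)⁴ 1_{|xᵢ| ≥ α}`. -/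
def gradR {d : ℕ} (α : ℝ) (x : Fin d → ℝ) : Fin d → ℝ :=
  fun i => if α ≤ |x i| then 4 * (|x i| - α) ^ 3 * Real.sign (x i) else 0

/-- Hessian quadratic form `vᵀ ∇²R(x) v` of the regularizer. -/
def hessRQuad {d : ℕ} (α : ℝ) (x v : Fin d → ℝ) : ℝ :=
  ∑ i, (if α ≤ |x i| then 12 * (|x i| - α) ^ 2 else 0) * (v i) ^ 2

/-- The distribution of the random observation pattern: each unordered pair is included
independently with probability `p`.  -/
def omegaMeasure (d : ℕ) (p : ℝ) (hp1 : p ≤ 1) : Measure (Fin d × Fin d → Bool) :=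
  Measure.pi fun _ => (PMF.bernoulli (Real.toNNReal p) (Real.toNNReal_le_one.mpr hp1)).toMeasure

/-!
Test the second-order condition at `v = z`. Writing `w = 1_Ω`, the inequality
`(a + b)² + 2ab ≤ 3 (a² + b²)` (with `a = zᵢxⱼ`, `b = xᵢzⱼ`) and the symmetry of `w` turn it into
`∑ᵢⱼ wᵢⱼ zᵢ²zⱼ² ≤ 3 ∑ⱼ xⱼ² ∑ᵢ wᵢⱼ zᵢ²`. So `‖x‖² ≥ 3/11` as soon as every row sum
`∑ᵢ wᵢⱼ zᵢ²` is at most `1.1 p` and the quadratic form `∑ᵢⱼ wᵢⱼ zᵢ²zⱼ²` is at least `0.9 p`.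
Both are weighted sums of the independent Bernoulli(`p`) indicators of the unordered pairs, of total
weight `1` and, by incoherence, with weights at most `μ²/d` resp. `2μ⁴/d²`; a Chernoff bound makes
them fail with probability `exp(-pd/(400μ²))` resp. `exp(-pd²/(800μ⁴))`, and the sampling rate
makes the union bound over the `d` rows and the quadratic form at most `1/d`.
-/

open scoped ENNReal
open ProbabilityTheory Real

section Chernoff

variable {K : Type*} [Fintype K] {β : Measure Bool} [IsProbabilityMeasure β] {p : ℝ}

def weightedSum (a : K → ℝ) (ω : K → Bool) : ℝ := ∑ k, a k * if ω k then 1 else 0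

lemma weightedSum_neg (a : K → ℝ) (ω : K → Bool) : weightedSum (-a) ω = -weightedSum a ω := by
  simp only [weightedSum, Pi.neg_apply, neg_mul, Finset.sum_neg_distrib]

lemma integral_exp_mul_ite (hβ : β.real {true} = p) (s : ℝ) :
    ∫ b, exp (s * if b then 1 else 0) ∂β = 1 - p + p * exp s := by
  have hfalse : β.real {false} = 1 - p := by
    rw [← hβ, ← probReal_compl_eq_one_sub (measurableSet_singleton true)]
    congr; ext b; simp
  simp [integral_fintype, hfalse, hβ]
  ring

lemma mgf_weightedSum_le (hβ : β.real {true} = p) (a : K → ℝ) (l : ℝ) :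
    mgf (weightedSum a) (Measure.pi fun _ => β) l ≤ exp (p * ∑ k, (exp (l * a k) - 1)) := by
  have hp0 : 0 ≤ p := hβ ▸ measureReal_nonneg
  have hp1 : p ≤ 1 := hβ ▸ measureReal_le_one
  calc mgf (weightedSum a) (Measure.pi fun _ => β) l
      = ∏ k, (1 - p + p * exp (l * a k)) := by
        simp only [mgf, weightedSum, Finset.mul_sum, Real.exp_sum]
        rw [integral_fintype_prod_eq_prod (E := fun _ => Bool)
          (fun k b => exp (l * (a k * if b then 1 else 0)))]
        refine Finset.prod_congr rfl fun k _ => ?_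
        simp_rw [← mul_assoc]
        exact integral_exp_mul_ite hβ _
    _ ≤ ∏ k, exp (p * (exp (l * a k) - 1)) := by
        refine Finset.prod_le_prod (fun k _ => ?_) (fun k _ => ?_)
        · nlinarith [exp_pos (l * a k)]
        · linarith [add_one_le_exp (p * (exp (l * a k) - 1))]
    _ = exp (p * ∑ k, (exp (l * a k) - 1)) := by rw [← Real.exp_sum, Finset.mul_sum]

lemma measure_weightedSum_ge_le_exp (hβ : β.real {true} = p) (a : K → ℝ) (t : ℝ) {l : ℝ}
    (hl : 0 ≤ l) :
    Measure.pi (fun _ => β) {ω | t ≤ weightedSum a ω}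
      ≤ ENNReal.ofReal (exp (p * ∑ k, (exp (l * a k) - 1) - l * t)) := by
  rw [← ofReal_measureReal]
  refine ENNReal.ofReal_le_ofReal ?_
  calc (Measure.pi fun _ => β).real {ω | t ≤ weightedSum a ω}
      ≤ exp (-l * t) * mgf (weightedSum a) (Measure.pi fun _ => β) l :=
        measure_ge_le_exp_mul_mgf t hl (Integrable.of_finite)
    _ ≤ exp (-l * t) * exp (p * ∑ k, (exp (l * a k) - 1)) := by
        gcongr; exact mgf_weightedSum_le hβ a l
    _ = exp (p * ∑ k, (exp (l * a k) - 1) - l * t) := by rw [← exp_add]; ring_nf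

lemma sum_exp_mul_sub_one_le {a : K → ℝ} {M l : ℝ} (ha0 : ∀ k, 0 ≤ a k) (haM : ∀ k, a k ≤ M)
    (hlM : |l| * M ≤ 1) :
    ∑ k, (exp (l * a k) - 1) ≤ (l + l ^ 2 * M) * ∑ k, a k := by
  rw [Finset.mul_sum]
  refine Finset.sum_le_sum fun k _ => ?_
  have hla : |l * a k| ≤ 1 := by
    rw [abs_mul, abs_of_nonneg (ha0 k)]
    exact (mul_le_mul_of_nonneg_left (haM k) (abs_nonneg l)).trans hlM
  have hsq : (l * a k) ^ 2 ≤ l ^ 2 * M * a k := by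
    rw [mul_pow, sq (a k), mul_assoc]
    exact mul_le_mul_of_nonneg_left (mul_le_mul_of_nonneg_right (haM k) (ha0 k)) (sq_nonneg l)
  linarith [(abs_le.mp (abs_exp_sub_one_sub_id_le hla)).2]

variable {a : K → ℝ} {M : ℝ}

lemma measure_weightedSum_ge_le (hβ : β.real {true} = p) (ha0 : ∀ k, 0 ≤ a k)
    (haM : ∀ k, a k ≤ M) (hM : 0 < M) :
    Measure.pi (fun _ => β) {ω | 11 / 10 * p * ∑ k, a k ≤ weightedSum a ω}
      ≤ ENNReal.ofReal (exp (-(p * (∑ k, a k) / (400 * M)))) := by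
  -- `l = 1/(20M)` makes the quadratic term `l²M ∑ a` of the exponent a twentieth of the linear one
  set l := 1 / (20 * M) with hl_def
  have hl0 : 0 < l := by positivity
  have hlM0 : l * M = 1 / 20 := by rw [hl_def]; field_simp
  have hl : |l| * M ≤ 1 := by rw [abs_of_pos hl0, hlM0]; norm_num
  have hlM : l + l ^ 2 * M = 21 / 20 * l := by linear_combination l * hlM0
  have hp0 : 0 ≤ p := hβ ▸ measureReal_nonneg
  refine (measure_weightedSum_ge_le_exp hβ a _ (l := l) (by positivity)).trans ?_
  refine ENNReal.ofReal_le_ofReal (exp_le_exp.mpr ?_)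
  calc p * ∑ k, (exp (l * a k) - 1) - l * (11 / 10 * p * ∑ k, a k)
      ≤ p * (21 / 20 * l * ∑ k, a k) - l * (11 / 10 * p * ∑ k, a k) := by
        rw [← hlM]; gcongr; exact sum_exp_mul_sub_one_le ha0 haM hl
    _ = -(p * (∑ k, a k) / (400 * M)) := by rw [hl_def]; field_simp; ring

lemma measure_weightedSum_le_le (hβ : β.real {true} = p) (ha0 : ∀ k, 0 ≤ a k)
    (haM : ∀ k, a k ≤ M) (hM : 0 < M) :
    Measure.pi (fun _ => β) {ω | weightedSum a ω ≤ 9 / 10 * p * ∑ k, a k}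
      ≤ ENNReal.ofReal (exp (-(p * (∑ k, a k) / (400 * M)))) := by
  set l := 1 / (20 * M) with hl_def
  have hl0 : 0 < l := by positivity
  have hlM0 : l * M = 1 / 20 := by rw [hl_def]; field_simp
  have hl : |-l| * M ≤ 1 := by rw [abs_neg, abs_of_pos hl0, hlM0]; norm_num
  have hlM : -l + (-l) ^ 2 * M = -(19 / 20 * l) := by linear_combination l * hlM0
  have hp0 : 0 ≤ p := hβ ▸ measureReal_nonneg
  have hset : {ω | weightedSum a ω ≤ 9 / 10 * p * ∑ k, a k}
      = {ω | -(9 / 10 * p * ∑ k, a k) ≤ weightedSum (-a) ω} := by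
    ext ω; simp [weightedSum_neg]
  rw [hset]
  refine (measure_weightedSum_ge_le_exp hβ (-a) _ (l := l) (by positivity)).trans ?_
  refine ENNReal.ofReal_le_ofReal (exp_le_exp.mpr ?_)
  have hexp := sum_exp_mul_sub_one_le ha0 haM hl
  simp only [Pi.neg_apply, mul_neg, neg_mul, hlM, sub_neg_eq_add] at hexp ⊢
  calc p * ∑ k, (exp (-(l * a k)) - 1) + l * (9 / 10 * p * ∑ k, a k)
      ≤ p * -(19 / 20 * l * ∑ k, a k) + l * (9 / 10 * p * ∑ k, a k) := by
        gcongr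
    _ = -(p * (∑ k, a k) / (400 * M)) := by rw [hl_def]; field_simp; ring

end Chernoff

section Fibers

variable {ι K : Type*} [Fintype ι] [DecidableEq K]

def fiberSum (e : ι → K) (c : ι → ℝ) (k : K) : ℝ := ∑ i with e i = k, c i

lemma sum_mul_ite_comp_eq_weightedSum [Fintype K] (e : ι → K) (c : ι → ℝ) (ω : K → Bool) :
    ∑ i, c i * (if ω (e i) then 1 else 0) = weightedSum (fiberSum e c) ω := by
  rw [← Finset.sum_fiberwise Finset.univ e]
  refine Finset.sum_congr rfl fun k _ => ?_
  rw [fiberSum, Finset.sum_mul]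
  refine Finset.sum_congr rfl fun i hi => ?_
  rw [(Finset.mem_filter.mp hi).2]

lemma sum_fiberSum [Fintype K] (e : ι → K) (c : ι → ℝ) : ∑ k, fiberSum e c k = ∑ i, c i :=
  Finset.sum_fiberwise Finset.univ e c

lemma fiberSum_nonneg {e : ι → K} {c : ι → ℝ} (hc : ∀ i, 0 ≤ c i) (k : K) :
    0 ≤ fiberSum e c k :=
  Finset.sum_nonneg fun i _ => hc i

lemma fiberSum_le {e : ι → K} {c : ι → ℝ} {B : ℝ} {n : ℕ} (hc : ∀ i, c i ≤ B) (hB : 0 ≤ B)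
    (hn : ∀ k, #{i | e i = k} ≤ n) (k : K) :
    fiberSum e c k ≤ n * B := by
  calc fiberSum e c k ≤ #{i | e i = k} • B := Finset.sum_le_card_nsmul _ _ _ fun i _ => hc i
    _ ≤ n * B := by rw [nsmul_eq_mul]; gcongr; exact hn k

end Fibers

section Deterministic

variable {ι : Type*} [Fintype ι]

lemma le_three_mul_sum_sq_of_secondOrder {w : ι → ι → ℝ} (hw0 : ∀ i j, 0 ≤ w i j)
    (hw : ∀ i j, w i j = w j i) {z x : ι → ℝ} {α β : ℝ}
    (hrow : ∀ j, ∑ i, w i j * z i ^ 2 ≤ α) (hβ : β ≤ ∑ i, ∑ j, w i j * (z i ^ 2 * z j ^ 2))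
    (hsoc : 2 * ∑ i, ∑ j, w i j * (z i * z j - x i * x j) * (z i * z j)
      ≤ ∑ i, ∑ j, w i j * (z i * x j + x i * z j) ^ 2) :
    β ≤ 3 * α * ∑ i, x i ^ 2 := by
  have hR : ∑ i, ∑ j, w i j * (z i ^ 2 * x j ^ 2) ≤ α * ∑ i, x i ^ 2 := by
    rw [Finset.sum_comm, Finset.mul_sum]
    refine Finset.sum_le_sum fun j _ => ?_
    calc ∑ i, w i j * (z i ^ 2 * x j ^ 2) = (∑ i, w i j * z i ^ 2) * x j ^ 2 := by
          rw [Finset.sum_mul]; exact Finset.sum_congr rfl fun i _ => by ring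
      _ ≤ α * x j ^ 2 := by gcongr; exact hrow j
  have hR' : ∑ i, ∑ j, w i j * (x i ^ 2 * z j ^ 2) = ∑ i, ∑ j, w i j * (z i ^ 2 * x j ^ 2) := by
    rw [Finset.sum_comm]
    exact Finset.sum_congr rfl fun i _ => Finset.sum_congr rfl fun j _ => by rw [hw]; ring
  -- with `a = zᵢxⱼ`, `b = xᵢzⱼ`: `2 (zᵢzⱼ)² = 2 (zᵢzⱼ - xᵢxⱼ) zᵢzⱼ + 2ab`
  -- and `(a + b)² + 2ab ≤ 3 (a² + b²)`
  have hpoint : ∀ i j, 2 * (w i j * (z i ^ 2 * z j ^ 2))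
      ≤ 2 * (w i j * (z i * z j - x i * x j) * (z i * z j)) - w i j * (z i * x j + x i * z j) ^ 2
        + 3 * (w i j * (z i ^ 2 * x j ^ 2)) + 3 * (w i j * (x i ^ 2 * z j ^ 2)) := fun i j => by
    nlinarith [mul_nonneg (hw0 i j) (sq_nonneg (z i * x j - x i * z j))]
  have hsum := Finset.sum_le_sum fun i (_ : i ∈ Finset.univ) =>
    Finset.sum_le_sum fun j (_ : j ∈ Finset.univ) => hpoint i j
  simp only [Finset.sum_add_distrib, Finset.sum_sub_distrib, ← Finset.mul_sum, hR'] at hsum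
  linarith

end Deterministic

section Sampling

variable {d : ℕ}

def obsMask (ω : Fin d × Fin d → Bool) (i j : Fin d) : ℝ := if ω (min i j, max i j) then 1 else 0

lemma projO_apply (ω : Fin d × Fin d → Bool) (A : Matrix (Fin d) (Fin d) ℝ) (i j : Fin d) :
    projO ω A i j = obsMask ω i j * A i j := by
  unfold projO obsMask; split_ifs <;> simp

lemma obsMask_comm (ω : Fin d × Fin d → Bool) (i j : Fin d) : obsMask ω i j = obsMask ω j i := by
  rw [obsMask, obsMask, min_comm, max_comm]

lemma obsMask_nonneg (ω : Fin d × Fin d → Bool) (i j : Fin d) : 0 ≤ obsMask ω i j := by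
  unfold obsMask; split_ifs <;> norm_num

lemma obsMask_sq (ω : Fin d × Fin d → Bool) (i j : Fin d) : obsMask ω i j ^ 2 = obsMask ω i j := by
  unfold obsMask; split_ifs <;> norm_num

lemma frobNorm_projO_sq (ω : Fin d × Fin d → Bool) (A : Matrix (Fin d) (Fin d) ℝ) :
    frobNorm (projO ω A) ^ 2 = ∑ i, ∑ j, obsMask ω i j * A i j ^ 2 := by
  rw [frobNorm, Real.sq_sqrt (by positivity)]
  simp only [projO_apply, mul_pow, obsMask_sq]

lemma dotProduct_projO_mulVec (ω : Fin d × Fin d → Bool) (A : Matrix (Fin d) (Fin d) ℝ)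
    (v : Fin d → ℝ) :
    v ⬝ᵥ (projO ω A).mulVec v = ∑ i, ∑ j, obsMask ω i j * A i j * (v i * v j) := by
  simp only [dotProduct, mulVec, projO_apply, Finset.mul_sum]
  refine Finset.sum_congr rfl fun i _ => Finset.sum_congr rfl fun j _ => ?_
  ring

lemma card_filter_minMax_left_le (j : Fin d) (k : Fin d × Fin d) :
    #{i | (min i j, max i j) = k} ≤ 1 := by
  refine Finset.card_le_one.mpr fun a ha b hb => ?_
  simp only [Finset.mem_filter, Finset.mem_univ, true_and] at ha hb
  rw [← hb, Prod.mk.injEq, Fin.ext_iff, Fin.ext_iff] at ha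
  simp only [Fin.coe_min, Fin.coe_max] at ha
  omega

lemma card_filter_minMax_le (k : Fin d × Fin d) :
    #{q : Fin d × Fin d | (min q.1 q.2, max q.1 q.2) = k} ≤ 2 := by
  refine (Finset.card_le_card (t := {(k.1, k.2), (k.2, k.1)}) fun q hq => ?_).trans
    (Finset.card_le_two)
  simp only [Finset.mem_filter, Finset.mem_univ, true_and] at hq
  rw [← hq]
  rcases le_total q.1 q.2 with h | h <;> simp [h]


def goodEvent (p : ℝ) (z : Fin d → ℝ) : Set (Fin d × Fin d → Bool) :=
  {ω | (∀ j, ∑ i, obsMask ω i j * z i ^ 2 ≤ 11 / 10 * p)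
    ∧ 9 / 10 * p ≤ ∑ i, ∑ j, obsMask ω i j * (z i ^ 2 * z j ^ 2)}

variable {β : Measure Bool} [IsProbabilityMeasure β] {p μ : ℝ} {z : Fin d → ℝ}

lemma goodEvent_subset (hp : 0 < p) :
    goodEvent p z ⊆ {ω | ∀ x : Fin d → ℝ,
      (∀ i, |x i| ≤ 2 * μ / Real.sqrt d) → vnorm x ≤ 1 →
      (∀ v : Fin d → ℝ,
        frobNorm (projO ω (outer v x + outer x v)) ^ 2 ≥
          2 * (v ⬝ᵥ (projO ω (outer z z - outer x x)).mulVec v)) →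
      vnorm x ^ 2 ≥ 1 / 4} := by
  rintro ω ⟨hrow, hquad⟩ x - - hsoc
  have hsocz := hsoc z
  rw [frobNorm_projO_sq, dotProduct_projO_mulVec] at hsocz
  simp only [outer, Matrix.add_apply, Matrix.sub_apply, Finset.mul_sum] at hsocz
  have := le_three_mul_sum_sq_of_secondOrder (obsMask_nonneg ω) (obsMask_comm ω) hrow hquad
    (by simpa only [Finset.mul_sum, mul_assoc] using hsocz)
  rw [vnorm, Real.sq_sqrt (by positivity)]
  nlinarith


lemma measure_rowSum_ge_le (hd : 0 < d) (hμ : 0 < μ) (hβ : β.real {true} = p)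
    (hz2 : ∀ i, z i ^ 2 ≤ μ ^ 2 / d) (hzn : ∑ i, z i ^ 2 = 1) (j : Fin d) :
    Measure.pi (fun _ => β) {ω | 11 / 10 * p ≤ ∑ i, obsMask ω i j * z i ^ 2}
      ≤ ENNReal.ofReal (exp (-(p * d / (400 * μ ^ 2)))) := by
  set e : Fin d → Fin d × Fin d := fun i => (min i j, max i j)
  have hsum : ∑ k, fiberSum e (z · ^ 2) k = 1 := by rw [sum_fiberSum, hzn]
  have hset : {ω | 11 / 10 * p ≤ ∑ i, obsMask ω i j * z i ^ 2}
      = {ω | 11 / 10 * p * ∑ k, fiberSum e (z · ^ 2) k ≤ weightedSum (fiberSum e (z · ^ 2)) ω} := by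
    ext ω
    rw [Set.mem_ofPred_eq, Set.mem_ofPred_eq, hsum, mul_one, ← sum_mul_ite_comp_eq_weightedSum]
    simp only [obsMask, e, mul_comm]
  rw [hset]
  refine (measure_weightedSum_ge_le hβ (fiberSum_nonneg fun i => sq_nonneg (z i))
    (fiberSum_le hz2 (by positivity) (card_filter_minMax_left_le j)) (by positivity)).trans_eq ?_
  rw [hsum]
  congr 3
  push_cast
  field_simp

lemma measure_quadSum_le_le (hd : 0 < d) (hμ : 0 < μ) (hβ : β.real {true} = p)
    (hz2 : ∀ i, z i ^ 2 ≤ μ ^ 2 / d) (hzn : ∑ i, z i ^ 2 = 1) :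
    Measure.pi (fun _ => β) {ω | ∑ i, ∑ j, obsMask ω i j * (z i ^ 2 * z j ^ 2) ≤ 9 / 10 * p}
      ≤ ENNReal.ofReal (exp (-(p * d ^ 2 / (800 * μ ^ 4)))) := by
  set e : Fin d × Fin d → Fin d × Fin d := fun q => (min q.1 q.2, max q.1 q.2)
  set c : Fin d × Fin d → ℝ := fun q => z q.1 ^ 2 * z q.2 ^ 2
  have hsum : ∑ k, fiberSum e c k = 1 := by
    rw [sum_fiberSum, Fintype.sum_prod_type, ← one_mul 1, ← hzn, Finset.sum_mul_sum]
  have hset : {ω | ∑ i, ∑ j, obsMask ω i j * (z i ^ 2 * z j ^ 2) ≤ 9 / 10 * p}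
      = {ω | weightedSum (fiberSum e c) ω ≤ 9 / 10 * p * ∑ k, fiberSum e c k} := by
    ext ω
    rw [Set.mem_ofPred_eq, Set.mem_ofPred_eq, hsum, mul_one, ← sum_mul_ite_comp_eq_weightedSum,
      Fintype.sum_prod_type]
    simp only [obsMask, e, c, mul_comm]
  have hc : ∀ q, c q ≤ μ ^ 4 / d ^ 2 := fun q => by
    rw [show μ ^ 4 / d ^ 2 = μ ^ 2 / d * (μ ^ 2 / d) by ring]
    exact mul_le_mul (hz2 q.1) (hz2 q.2) (sq_nonneg _) (by positivity)
  have hB := fiberSum_le (n := 2) hc (by positivity) card_filter_minMax_le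
  have h0 := fiberSum_nonneg (e := e) fun q => mul_nonneg (sq_nonneg (z q.1)) (sq_nonneg (z q.2))
  rw [hset]
  refine (measure_weightedSum_le_le hβ h0 hB (by positivity)).trans_eq ?_
  rw [hsum, Nat.cast_ofNat, mul_one]
  congr 3
  field_simp
  ring


lemma measure_compl_goodEvent_le (hd : 0 < d) (hμ : 0 < μ) (hβ : β.real {true} = p)
    (hz2 : ∀ i, z i ^ 2 ≤ μ ^ 2 / d) (hzn : ∑ i, z i ^ 2 = 1) :
    Measure.pi (fun _ => β) (goodEvent p z)ᶜ
      ≤ ENNReal.ofReal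
          (d * exp (-(p * d / (400 * μ ^ 2))) + exp (-(p * d ^ 2 / (800 * μ ^ 4)))) := by
  have hsub : (goodEvent p z)ᶜ ⊆ (⋃ j, {ω | 11 / 10 * p ≤ ∑ i, obsMask ω i j * z i ^ 2})
      ∪ {ω | ∑ i, ∑ j, obsMask ω i j * (z i ^ 2 * z j ^ 2) ≤ 9 / 10 * p} := by
    intro ω hω
    simp only [goodEvent, Set.mem_compl_iff, Set.mem_ofPred_eq, not_and_or, not_forall,
      not_le] at hω
    rcases hω with ⟨j, hj⟩ | h
    · exact Or.inl (Set.mem_iUnion.mpr ⟨j, hj.le⟩)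
    · exact Or.inr h.le
  rw [ENNReal.ofReal_add (by positivity) (by positivity), ENNReal.ofReal_mul (by positivity),
    ENNReal.ofReal_natCast]
  calc _ ≤ _ := measure_mono hsub
    _ ≤ ∑ j : Fin d, Measure.pi (fun _ => β) {ω | 11 / 10 * p ≤ ∑ i, obsMask ω i j * z i ^ 2}
        + Measure.pi (fun _ => β)
          {ω | ∑ i, ∑ j, obsMask ω i j * (z i ^ 2 * z j ^ 2) ≤ 9 / 10 * p} :=
      (measure_union_le _ _).trans (add_le_add_left (measure_iUnion_fintype_le _ _) _)
    _ ≤ ∑ _j : Fin d, ENNReal.ofReal (exp (-(p * d / (400 * μ ^ 2))))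
        + ENNReal.ofReal (exp (-(p * d ^ 2 / (800 * μ ^ 4)))) :=
      add_le_add (Finset.sum_le_sum fun j _ => measure_rowSum_ge_le hd hμ hβ hz2 hzn j)
        (measure_quadSum_le_le hd hμ hβ hz2 hzn)
    _ = _ := by simp

end Sampling

instance (d : ℕ) (p : ℝ) (hp1 : p ≤ 1) : IsProbabilityMeasure (omegaMeasure d p hp1) := by
  unfold omegaMeasure; infer_instance

lemma exp_neg_le_inv_of_log_le {x y : ℝ} (hx : 0 < x) (h : log x ≤ y) : exp (-y) ≤ x⁻¹ := by
  calc exp (-y) ≤ exp (-log x) := exp_le_exp.mpr (neg_le_neg h)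
    _ = x⁻¹ := by rw [exp_neg, exp_log hx]

lemma natCast_mul_exp_add_exp_le_inv {d : ℕ} {p μ : ℝ} (hd : 2 ≤ d) (hμ : 1 ≤ μ)
    (hpd : 1200 * μ ^ 4 * log d ≤ p * d) :
    d * exp (-(p * d / (400 * μ ^ 2))) + exp (-(p * d ^ 2 / (800 * μ ^ 4))) ≤ (d : ℝ)⁻¹ := by
  have hd2 : (2 : ℝ) ≤ d := by exact_mod_cast hd
  have hL : log 2 ≤ log d := log_le_log (by norm_num) hd2
  have hL0 : 0 < log 2 := log_pos (by norm_num)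
  have hμ24 : μ ^ 2 ≤ μ ^ 4 := pow_le_pow_right₀ hμ (by norm_num)
  have hrow : exp (-(p * d / (400 * μ ^ 2))) ≤ (2 * (d : ℝ) ^ 2)⁻¹ := by
    refine exp_neg_le_inv_of_log_le (by positivity) ?_
    rw [log_mul (by norm_num) (by positivity), log_pow, le_div_iff₀ (by positivity)]
    push_cast
    nlinarith [mul_le_mul_of_nonneg_right hμ24 (hL0.le.trans hL)]
  have hquad : exp (-(p * d ^ 2 / (800 * μ ^ 4))) ≤ (2 * (d : ℝ))⁻¹ := by
    refine exp_neg_le_inv_of_log_le (by positivity) ?_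
    rw [log_mul (by norm_num) (by positivity), le_div_iff₀ (by positivity)]
    have hpd0 : 0 ≤ p * d := hpd.trans' (by positivity)
    nlinarith [mul_le_mul_of_nonneg_left hd2 hpd0]
  calc _ ≤ d * (2 * (d : ℝ) ^ 2)⁻¹ + (2 * (d : ℝ))⁻¹ := by gcongr
    _ = (d : ℝ)⁻¹ := by field_simp; ring

lemma four_fifths_mul_log_le_rpow {d : ℕ} (hd : 2 ≤ d) :
    4 / 5 * log d ≤ log d ^ ((3 : ℝ) / 2) := by
  have hL : 16 / 25 ≤ log d := by
    linarith [log_two_gt_d9, log_le_log two_pos (by exact_mod_cast hd : (2 : ℝ) ≤ d)]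
  rw [show (3 : ℝ) / 2 = 1 + 1 / 2 by norm_num, rpow_add (by linarith), rpow_one, ← sqrt_eq_rpow,
    mul_comm]
  gcongr
  exact le_sqrt_of_sq_le (by linarith)

lemma pow_four_mul_log_le_of_le_div {d : ℕ} {p μ : ℝ} (hd : 2 ≤ d) (hμ : 1 ≤ μ)
    (hp : 1500 * μ ^ 6 * log d ^ ((3 : ℝ) / 2) / d ≤ p) :
    1200 * μ ^ 4 * log d ≤ p * d := by
  rw [div_le_iff₀ (by positivity)] at hp
  have hL : 0 ≤ log (d : ℝ) := log_nonneg (by exact_mod_cast hd.trans' one_le_two)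
  calc 1200 * μ ^ 4 * log d = 1500 * μ ^ 4 * (4 / 5 * log d) := by ring
    _ ≤ 1500 * μ ^ 6 * log d ^ ((3 : ℝ) / 2) := by
      gcongr 1500 * ?_ * ?_
      · exact pow_le_pow_right₀ hμ (by norm_num)
      · exact four_fifths_mul_log_le_rpow hd
    _ ≤ p * d := hp

lemma one_le_of_sum_sq_eq_one {d : ℕ} {μ : ℝ} {z : Fin d → ℝ} (hμ : 0 < μ) (hd : 0 < d)
    (hz2 : ∀ i, z i ^ 2 ≤ μ ^ 2 / d) (hzn : ∑ i, z i ^ 2 = 1) : 1 ≤ μ := by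
  have : (1 : ℝ) ≤ μ ^ 2 := by
    calc (1 : ℝ) = ∑ i, z i ^ 2 := hzn.symm
      _ ≤ ∑ _i : Fin d, μ ^ 2 / d := Finset.sum_le_sum fun i _ => hz2 i
      _ = μ ^ 2 := by simp; field_simp
  nlinarith

/-- there is an absolute constant `c` such that if `p ≥ c μ⁶ log^{1.5} d / d`,
then with probability at least `1 − 1/d` over `Ω`, every incoherent `x`
(`‖x‖_∞ ≤ 2μ/√d`, `‖x‖₂ ≤ 1`) satisfying the (regularizer-free) second-order optimality
condition has `‖x‖₂² ≥ 1/4`. -/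
theorem stmt5 :
    ∃ c : ℝ, 0 < c ∧
      ∀ (d : ℕ), 0 < d →
      ∀ (μ p : ℝ) (z : Fin d → ℝ),
        0 < μ → 0 < p → ∀ (hp1 : p ≤ 1),
        vnorm z = 1 → (∀ i, |z i| ≤ μ / Real.sqrt d) →
        c * μ ^ 6 * Real.log d ^ ((3 : ℝ) / 2) / d ≤ p →
        1 - 1 / (d : ENNReal) ≤
          omegaMeasure d p hp1
            {ω | ∀ x : Fin d → ℝ,
              (∀ i, |x i| ≤ 2 * μ / Real.sqrt d) → vnorm x ≤ 1 →
              (∀ v : Fin d → ℝ,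
                frobNorm (projO ω (outer v x + outer x v)) ^ 2 ≥
                  2 * (v ⬝ᵥ (projO ω (outer z z - outer x x)).mulVec v)) →
              vnorm x ^ 2 ≥ 1 / 4} := by
  refine ⟨1500, by norm_num, fun d hd μ p z hμ hp hp1 hz hzinc hpl => ?_⟩
  obtain rfl | hd2 : d = 1 ∨ 2 ≤ d := by omega
  · simp
  have hzn : ∑ i, z i ^ 2 = 1 := by rwa [vnorm, Real.sqrt_eq_one] at hz
  have hz2 : ∀ i, z i ^ 2 ≤ μ ^ 2 / d := fun i => by
    simpa [sq_abs, div_pow] using pow_le_pow_left₀ (abs_nonneg _) (hzinc i) 2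
  have hμ1 := one_le_of_sum_sq_eq_one hμ hd hz2 hzn
  have hpd := pow_four_mul_log_le_of_le_div hd2 hμ1 hpl
  have hβ : (PMF.bernoulli (Real.toNNReal p) (Real.toNNReal_le_one.mpr hp1)).toMeasure.real {true}
      = p := by
    simp [measureReal_def, PMF.bernoulli_apply, hp.le]
  have hbad : omegaMeasure d p hp1 (goodEvent p z)ᶜ ≤ 1 / (d : ℝ≥0∞) :=
    (measure_compl_goodEvent_le hd hμ hβ hz2 hzn).trans <| by
      rw [one_div, ← ENNReal.ofReal_natCast, ← ENNReal.ofReal_inv_of_pos (by positivity)]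
      exact ENNReal.ofReal_le_ofReal (natCast_mul_exp_add_exp_le_inv hd2 hμ1 hpd)
  calc 1 - 1 / (d : ℝ≥0∞) ≤ 1 - omegaMeasure d p hp1 (goodEvent p z)ᶜ := tsub_le_tsub_left hbad 1
    _ = omegaMeasure d p hp1 (goodEvent p z) := by
      rw [prob_compl_eq_one_sub .of_discrete, ENNReal.sub_sub_cancel ENNReal.one_ne_top prob_le_one]
    _ ≤ _ := measure_mono (goodEvent_subset hp)
end
end

section
/- There exist absolute constants c, C > 0 such that if p ≥ c·μ⁶·log^{1.5}(d)/d, then with probability at least 1 − 1/d over the random choice of Ω the following holds: every x ∈ B = {x ∈ ℝ^d : ‖x‖_∞ ≤ 2μ/√d, ‖x‖₂ ≤ 1} satisfying the first-order optimality condition P_Ω(zzᵀ − xxᵀ)x = 0 satisfies ‖⟨z, x⟩z − ‖x‖₂²·x‖₂ ≤ C·μ³·log(d)·(pd)^{−1/2}. -/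
/-!
Let `D = P_Ω(𝟙𝟙ᵀ) - p 𝟙𝟙ᵀ`. Entrywise `P_Ω(A) = p A + D ∘ A`, so the first-order condition reads
`p ((zᵀx) z - ‖x‖² x) = x ∘ D (x ∘ x) - z ∘ D (z ∘ x)`, and incoherence of `z` and `x` bounds the
right-hand side by `5 μ² ‖D‖ / d`.

`‖D‖` is controlled by the trace method: `‖D‖^{2k} ≤ tr D^{2k}`, a sum over closed walks of
length `2k`. A walk has expectation zero unless it traverses each of its edges at least twice; it
then has at most `k` edges and `k + 1` vertices, so `𝔼 tr D^{2k} ≤ d (pd)^k (k+2)^{2k+2}`. With `k`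
a power of two in `[log d, 2 log d]`, Markov's inequality gives `‖D‖ ≤ 27 log d √(pd)` with
probability at least `1 - 1/d`.
-/

open Matrix Finset MeasureTheory

noncomputable section

section EuclideanNorm

variable {n : ℕ}

lemma vnorm_eq_norm (x : Fin n → ℝ) : vnorm x = ‖WithLp.toLp 2 x‖ := by
  simp [vnorm, EuclideanSpace.norm_eq]

lemma vnorm_nonneg (x : Fin n → ℝ) : 0 ≤ vnorm x := Real.sqrt_nonneg _

lemma vnorm_sq (x : Fin n → ℝ) : vnorm x ^ 2 = x ⬝ᵥ x := by
  rw [vnorm, Real.sq_sqrt (by positivity)]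
  simp only [dotProduct, sq]

lemma vnorm_sub_le (x y : Fin n → ℝ) : vnorm (x - y) ≤ vnorm x + vnorm y := by
  simpa only [vnorm_eq_norm, WithLp.toLp_sub] using norm_sub_le _ _

lemma vnorm_smul (a : ℝ) (x : Fin n → ℝ) : vnorm (a • x) = |a| * vnorm x := by
  rw [vnorm_eq_norm, vnorm_eq_norm, WithLp.toLp_smul, norm_smul, Real.norm_eq_abs]

lemma dotProduct_le_vnorm_mul_vnorm (x y : Fin n → ℝ) : x ⬝ᵥ y ≤ vnorm x * vnorm y :=
  Real.sum_mul_le_sqrt_mul_sqrt _ x y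

lemma vnorm_le_of_sq_le {x : Fin n → ℝ} {a : ℝ} (ha : 0 ≤ a) (h : x ⬝ᵥ x ≤ a ^ 2) :
    vnorm x ≤ a :=
  (pow_le_pow_iff_left₀ (vnorm_nonneg x) ha two_ne_zero).mp (vnorm_sq x ▸ h)

lemma vnorm_mul_le {a x : Fin n → ℝ} {ν : ℝ} (hν : 0 ≤ ν) (ha : ∀ i, |a i| ≤ ν) :
    vnorm (a * x) ≤ ν * vnorm x := by
  refine vnorm_le_of_sq_le (mul_nonneg hν (vnorm_nonneg x)) ?_
  rw [mul_pow, vnorm_sq, dotProduct, dotProduct, mul_sum]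
  refine sum_le_sum fun i _ => ?_
  have hai : a i * a i ≤ ν ^ 2 := by
    rw [← abs_mul_abs_self, sq]
    exact mul_self_le_mul_self (abs_nonneg _) (ha i)
  calc (a * x) i * (a * x) i = a i * a i * (x i * x i) := by simp only [Pi.mul_apply]; ring
    _ ≤ ν ^ 2 * (x i * x i) := mul_le_mul_of_nonneg_right hai (mul_self_nonneg _)

lemma frobNorm_nonneg (A : Matrix (Fin n) (Fin n) ℝ) : 0 ≤ frobNorm A := Real.sqrt_nonneg _

lemma vnorm_mulVec_le (A : Matrix (Fin n) (Fin n) ℝ) (x : Fin n → ℝ) :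
    vnorm (A *ᵥ x) ≤ frobNorm A * vnorm x := by
  refine vnorm_le_of_sq_le (mul_nonneg (frobNorm_nonneg A) (vnorm_nonneg x)) ?_
  rw [mul_pow, frobNorm, Real.sq_sqrt (by positivity), vnorm_sq, dotProduct, sum_mul]
  refine sum_le_sum fun i _ => ?_
  simpa [mulVec, dotProduct, sq] using sum_mul_sq_le_sq_mul_sq univ (A i) x

lemma one_le_sq_of_vnorm_eq_one {μ : ℝ} {z : Fin n → ℝ} (hz : vnorm z = 1)
    (hzinc : ∀ i, |z i| ≤ μ / √n) : 1 ≤ μ ^ 2 := by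
  rcases Nat.eq_zero_or_pos n with rfl | hn
  · simp [vnorm] at hz
  have hn0 : (0 : ℝ) < n := Nat.cast_pos.mpr hn
  calc 1 = ∑ i, z i ^ 2 := by rw [← one_pow 2, ← hz, vnorm_sq, dotProduct]; simp [sq]
    _ ≤ ∑ _i : Fin n, (μ / √n) ^ 2 := by
        refine sum_le_sum fun i _ => ?_
        rw [← sq_abs]
        exact pow_le_pow_left₀ (abs_nonneg _) (hzinc i) 2
    _ = μ ^ 2 := by
        rw [sum_const, card_univ, Fintype.card_fin, nsmul_eq_mul, div_pow,
          Real.sq_sqrt hn0.le, mul_div_cancel₀ _ hn0.ne']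

end EuclideanNorm

section TraceMethod

variable {n : ℕ} {A : Matrix (Fin n) (Fin n) ℝ}

lemma frobNorm_sq_of_transpose_eq (hA : Aᵀ = A) : frobNorm A ^ 2 = (A * A).trace := by
  rw [frobNorm, Real.sq_sqrt (by positivity)]
  refine sum_congr rfl fun i _ => sum_congr rfl fun j _ => ?_
  exact (sq _).trans (congrArg (A i j * ·) (congrFun₂ hA j i))

lemma vnorm_mulVec_sq_le (hA : Aᵀ = A) (x : Fin n → ℝ) :
    vnorm (A *ᵥ x) ^ 2 ≤ vnorm x * vnorm ((A * A) *ᵥ x) := by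
  rw [vnorm_sq, ← mulVec_mulVec, dotProduct_mulVec, ← mulVec_transpose, hA, dotProduct_comm]
  exact dotProduct_le_vnorm_mul_vnorm _ _

lemma vnorm_mulVec_le_of_pow_two_pow (hA : Aᵀ = A) (J : ℕ) {t : ℝ} (ht : 0 ≤ t)
    (h : ∀ x, vnorm ((A ^ 2 ^ J) *ᵥ x) ≤ t ^ 2 ^ J * vnorm x) (x : Fin n → ℝ) :
    vnorm (A *ᵥ x) ≤ t * vnorm x := by
  induction J generalizing A t with
  | zero => simpa using h x
  | succ J ih =>
    -- Apply the induction hypothesis to `A * A` and `t ^ 2`.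
    have hAA : (A * A)ᵀ = A * A := by rw [transpose_mul, hA]
    have hsq := ih hAA (sq_nonneg t) (fun y => by
      simpa only [← sq, ← pow_mul, ← pow_succ'] using h y)
    refine vnorm_le_of_sq_le (mul_nonneg ht (vnorm_nonneg x)) ?_
    rw [← vnorm_sq]
    nlinarith [vnorm_mulVec_sq_le hA x, hsq, vnorm_nonneg x]

lemma vnorm_mulVec_le_of_trace_pow_le (hA : Aᵀ = A) (J : ℕ) {t : ℝ} (ht : 0 ≤ t)
    (htr : (A ^ (2 * 2 ^ J)).trace ≤ t ^ (2 * 2 ^ J)) (x : Fin n → ℝ) :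
    vnorm (A *ᵥ x) ≤ t * vnorm x := by
  refine vnorm_mulVec_le_of_pow_two_pow hA J ht (fun y => ?_) x
  refine (vnorm_mulVec_le _ y).trans (mul_le_mul_of_nonneg_right ?_ (vnorm_nonneg y))
  have hB : (A ^ 2 ^ J)ᵀ = A ^ 2 ^ J := by rw [transpose_pow, hA]
  refine (pow_le_pow_iff_left₀ (frobNorm_nonneg _) (by positivity) two_ne_zero).mp ?_
  rw [frobNorm_sq_of_transpose_eq hB, ← pow_add, ← two_mul, ← pow_mul, mul_comm (2 ^ J)]
  exact htr

end TraceMethod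

section Walks

lemma sum_pi_fin_succ_eq_sum_cons {α M : Type*} [Fintype α] [AddCommMonoid M] {m : ℕ}
    (F : (Fin (m + 1) → α) → M) : ∑ s, F s = ∑ a, ∑ s : Fin m → α, F (Fin.cons a s) := by
  rw [← Fintype.sum_prod_type']
  exact ((Fin.consEquiv fun _ => α).sum_comp F).symm

variable {d : ℕ}

def walkProd (A : Matrix (Fin d) (Fin d) ℝ) {m : ℕ} (s : Fin (m + 1) → Fin d) : ℝ :=
  ∏ t : Fin m, A (s t.castSucc) (s t.succ)

lemma walkProd_cons (A : Matrix (Fin d) (Fin d) ℝ) {m : ℕ} (a : Fin d) (s : Fin (m + 1) → Fin d) :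
    walkProd A (Fin.cons a s : Fin (m + 2) → Fin d) = A a (s 0) * walkProd A s := by
  simp [walkProd, Fin.prod_univ_succ]

lemma pow_apply_eq_sum_walkProd (A : Matrix (Fin d) (Fin d) ℝ) (m : ℕ) (i j : Fin d) :
    (A ^ m) i j =
      ∑ s : Fin (m + 1) → Fin d, if s 0 = i ∧ s (Fin.last m) = j then walkProd A s else 0 := by
  induction m generalizing i with
  | zero =>
    rw [sum_pi_fin_succ_eq_sum_cons]
    simp [walkProd, one_apply, ite_and]
  | succ m ih =>
    rw [pow_succ', mul_apply, sum_pi_fin_succ_eq_sum_cons]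
    simp only [ih, mul_sum, Fin.cons_zero, ← Fin.succ_last, Fin.cons_succ, walkProd_cons]
    rw [sum_comm]
    simp [ite_and, eq_comm]

lemma trace_pow_eq_sum_walkProd (A : Matrix (Fin d) (Fin d) ℝ) (m : ℕ) :
    (A ^ m).trace =
      ∑ s : Fin (m + 1) → Fin d, if s (Fin.last m) = s 0 then walkProd A s else 0 := by
  simp only [trace, Matrix.diag, pow_apply_eq_sum_walkProd]
  rw [sum_comm]
  simp [ite_and]

end Walks

section WalkCombinatorics

variable {d m : ℕ}

/-- The `t`-th step of the walk `s`, as an unordered pair encoded as in `projO`. -/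
def walkEdge (s : Fin (m + 1) → Fin d) (t : Fin m) : Fin d × Fin d :=
  (min (s t.castSucc) (s t.succ), max (s t.castSucc) (s t.succ))

def edgeMult (s : Fin (m + 1) → Fin d) (e : Fin d × Fin d) : ℕ :=
  #{t | walkEdge s t = e}

lemma sum_edgeMult (s : Fin (m + 1) → Fin d) : ∑ e, edgeMult s e = m := by
  simpa [edgeMult] using (Finset.card_eq_sum_card_fiberwise
    (f := walkEdge s) (s := univ) (t := univ) fun t _ => mem_univ _).symm

lemma edgeMult_walkEdge_pos (s : Fin (m + 1) → Fin d) (t : Fin m) :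
    0 < edgeMult s (walkEdge s t) :=
  card_pos.mpr ⟨t, by simp⟩

lemma edgeMult_eq_zero_of_notMem {s : Fin (m + 1) → Fin d} {e : Fin d × Fin d}
    (he : e ∉ univ.image (walkEdge s)) : edgeMult s e = 0 := by
  simp_all [edgeMult]

lemma two_mul_card_walkEdges_le {s : Fin (m + 1) → Fin d}
    (hs : ∀ t, edgeMult s (walkEdge s t) ≠ 1) : 2 * #(univ.image (walkEdge s)) ≤ m := by
  calc 2 * #(univ.image (walkEdge s))
      = ∑ _e ∈ univ.image (walkEdge s), 2 := by rw [sum_const, smul_eq_mul, mul_comm]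
    _ ≤ ∑ e ∈ univ.image (walkEdge s), edgeMult s e := by
      refine sum_le_sum fun e he => ?_
      obtain ⟨t, -, rfl⟩ := mem_image.mp he
      have := edgeMult_walkEdge_pos s t
      have := hs t
      omega
    _ ≤ ∑ e, edgeMult s e := sum_le_sum_of_subset (subset_univ _)
    _ = m := sum_edgeMult s

lemma walkEdge_endpoints_mem (s : Fin (m + 1) → Fin d) (t : Fin m) :
    (walkEdge s t).1 ∈ univ.image s ∧ (walkEdge s t).2 ∈ univ.image s := by
  constructor
  · rcases min_choice (s t.castSucc) (s t.succ) with h | h <;> simp [walkEdge, h]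
  · rcases max_choice (s t.castSucc) (s t.succ) with h | h <;> simp [walkEdge, h]

lemma walkEdge_endpoint_succ (s : Fin (m + 1) → Fin d) (t : Fin m) :
    s t.succ = (walkEdge s t).1 ∨ s t.succ = (walkEdge s t).2 := by
  rcases le_total (s t.castSucc) (s t.succ) with h | h
  · simp [walkEdge, max_eq_right h]
  · simp [walkEdge, min_eq_right h]

lemma card_image_le_card_walkEdges_add_one (s : Fin (m + 1) → Fin d) :
    #(univ.image s) ≤ #(univ.image (walkEdge s)) + 1 := by
  induction m with
  | zero => exact card_image_le.trans (by simp)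
  | succ m ih =>
    set s' := Fin.init s
    have hV : univ.image s = insert (s (Fin.last _)) (univ.image s') := by
      ext v
      simp only [mem_image, mem_univ, true_and, mem_insert]
      constructor
      · rintro ⟨t, rfl⟩
        induction t using Fin.lastCases with
        | last => exact .inl rfl
        | cast t => exact .inr ⟨t, rfl⟩
      · rintro (rfl | ⟨t, rfl⟩) <;> exact ⟨_, rfl⟩
    have hE : univ.image (walkEdge s) =
        insert (walkEdge s (Fin.last m)) (univ.image (walkEdge s')) := by
      ext e
      simp only [mem_image, mem_univ, true_and, mem_insert]
      have hs' (t : Fin m) : walkEdge s' t = walkEdge s t.castSucc := by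
        rw [walkEdge, walkEdge, Fin.succ_castSucc]; rfl
      constructor
      · rintro ⟨t, rfl⟩
        induction t using Fin.lastCases with
        | last => exact .inl rfl
        | cast t => exact .inr ⟨t, hs' t⟩
      · rintro (rfl | ⟨t, rfl⟩)
        exacts [⟨_, rfl⟩, ⟨_, (hs' t).symm⟩]
    by_cases hnew : s (Fin.last _) ∈ univ.image s'
    · rw [hV, insert_eq_of_mem hnew, hE]
      exact (ih s').trans (by grw [← subset_insert])
    · -- The last step enters a new vertex, so it is an edge not seen before.
      have hnewE : walkEdge s (Fin.last m) ∉ univ.image (walkEdge s') := by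
        rintro h
        obtain ⟨t, -, ht⟩ := mem_image.mp h
        have := walkEdge_endpoints_mem s' t
        rcases walkEdge_endpoint_succ s (Fin.last m) with h' | h' <;>
          simp_all [Fin.succ_last]
      rw [hV, hE, card_insert_of_notMem hnew, card_insert_of_notMem hnewE]
      grw [ih s']

lemma card_filter_card_image_eq_le (m v : ℕ) :
    #{s : Fin m → Fin d | #(univ.image s) = v} ≤ d ^ v * v ^ m := by
  set W := ({s : Fin m → Fin d | #(univ.image s) = v} : Finset _)
  -- A map is determined by its image, a `v`-subset of `Fin d`, and a map into that image.
  have hfiber : ∀ S ∈ W.image (fun s => univ.image s), #{s ∈ W | univ.image s = S} ≤ v ^ m := by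
    intro S hS
    obtain ⟨s₀, hs₀, rfl⟩ := mem_image.mp hS
    calc #{s ∈ W | univ.image s = univ.image s₀}
        ≤ #(Fintype.piFinset fun _ : Fin m => univ.image s₀) := by
          refine card_le_card fun s hs => Fintype.mem_piFinset.mpr fun t => ?_
          rw [← (mem_filter.mp hs).2]
          exact mem_image_of_mem s (mem_univ t)
      _ = v ^ m := by simp [(mem_filter.mp hs₀).2]
  have hsets : #(W.image fun s => univ.image s) ≤ d ^ v := by
    calc #(W.image fun s => univ.image s)
        ≤ #(powersetCard v (univ : Finset (Fin d))) := by
          refine card_le_card fun S hS => ?_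
          obtain ⟨s, hs, rfl⟩ := mem_image.mp hS
          exact mem_powersetCard.mpr ⟨subset_univ _, (mem_filter.mp hs).2⟩
      _ ≤ d ^ v := by simpa using Nat.choose_le_pow d v
  calc #W ≤ v ^ m * #(W.image fun s => univ.image s) := card_le_mul_card_image _ _ hfiber
    _ ≤ d ^ v * v ^ m := by rw [mul_comm]; exact Nat.mul_le_mul_right _ hsets

end WalkCombinatorics

section Numerics

lemma exp_four_lt : Real.exp 4 < 55 := by
  have h : Real.exp 4 = Real.exp 1 ^ 4 := by rw [← Real.exp_nat_mul]; norm_num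
  rw [h]
  calc Real.exp 1 ^ 4 < 2.7182818286 ^ 4 := by gcongr; exact Real.exp_one_lt_d9
    _ < 55 := by norm_num

lemma exp_sq_mul_pow_le {L : ℝ} {k : ℕ} (hL : 4 ≤ L) (hLk : L ≤ k) (hkL : k ≤ 2 * L) :
    Real.exp L ^ 2 * (k + 2) ^ (2 * k + 2) ≤ (27 * L) ^ (2 * k) := by
  have h3L : 3 * L ≤ Real.exp L := by
    nlinarith [Real.quadratic_le_exp_of_nonneg (by linarith : 0 ≤ L)]
  have h81 : Real.exp L ^ 4 ≤ 81 ^ k := by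
    calc Real.exp L ^ 4 = Real.exp (4 * L) := by rw [← Real.exp_nat_mul]; norm_num
      _ ≤ Real.exp (4 * k) := by gcongr
      _ = Real.exp 4 ^ k := by rw [← Real.exp_nat_mul]; ring_nf
      _ ≤ 81 ^ k := by gcongr; linarith [exp_four_lt]
  calc Real.exp L ^ 2 * (k + 2) ^ (2 * k + 2)
      ≤ Real.exp L ^ 2 * (3 * L) ^ (2 * k + 2) := by gcongr; linarith
    _ = (3 * L) ^ (2 * k) * (Real.exp L ^ 2 * (3 * L) ^ 2) := by ring
    _ ≤ (3 * L) ^ (2 * k) * Real.exp L ^ 4 := by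
        gcongr
        nlinarith [pow_le_pow_left₀ (by linarith) h3L 2]
    _ ≤ (3 * L) ^ (2 * k) * 81 ^ k := by gcongr
    _ = (27 * L) ^ (2 * k) := by rw [pow_mul, pow_mul, ← mul_pow]; ring

lemma quarter_le_log_rpow {d : ℕ} (hd : 2 ≤ d) : 1 / 4 ≤ Real.log d ^ ((3 : ℝ) / 2) := by
  have hlog : 1 / 2 ≤ Real.log d :=
    (by linarith [Real.log_two_gt_d9] : (1 : ℝ) / 2 ≤ Real.log 2).trans
      (Real.log_le_log two_pos (by exact_mod_cast hd))
  calc (1 : ℝ) / 4 = (1 / 2) ^ (2 : ℝ) := by norm_num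
    _ ≤ (1 / 2) ^ ((3 : ℝ) / 2) :=
        Real.rpow_le_rpow_of_exponent_ge (by norm_num) (by norm_num) (by norm_num)
    _ ≤ Real.log d ^ ((3 : ℝ) / 2) := Real.rpow_le_rpow (by norm_num) hlog (by norm_num)

end Numerics

section RandomMask

variable {d : ℕ} {p : ℝ}

instance (hp1 : p ≤ 1) : IsProbabilityMeasure (omegaMeasure d p hp1) := by
  unfold omegaMeasure
  infer_instance

lemma integral_prod_omegaMeasure (hp0 : 0 ≤ p) (hp1 : p ≤ 1) (f : Fin d × Fin d → Bool → ℝ) :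
    ∫ ω, ∏ e, f e (ω e) ∂omegaMeasure d p hp1 = ∏ e, (p * f e true + (1 - p) * f e false) := by
  rw [omegaMeasure, integral_fintype_prod_eq_prod]
  refine prod_congr rfl fun e _ => ?_
  rw [integral_fintype (.of_finite), Fintype.sum_bool]
  simp only [measureReal_def, PMF.toMeasure_apply_singleton _ _ (measurableSet_singleton _)]
  change ((p.toNNReal : ENNReal)).toReal * _ + ((1 - p.toNNReal : ENNReal)).toReal * _ = _
  rw [ENNReal.toReal_sub_of_le (by simpa using hp1) ENNReal.one_ne_top]
  simp [hp0]

/-- `P_Ω(𝟙𝟙ᵀ) - p 𝟙𝟙ᵀ`. -/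
def centeredMask (p : ℝ) (ω : Fin d × Fin d → Bool) : Matrix (Fin d) (Fin d) ℝ :=
  fun i j => (if ω (min i j, max i j) then 1 else 0) - p

lemma centeredMask_transpose (p : ℝ) (ω : Fin d × Fin d → Bool) :
    (centeredMask p ω)ᵀ = centeredMask p ω := by
  ext i j
  simp only [transpose_apply, centeredMask, min_comm, max_comm]

def bernoulliCentralMoment (p : ℝ) (m : ℕ) : ℝ := p * (1 - p) ^ m + (1 - p) * (-p) ^ m

lemma abs_bernoulliCentralMoment_le (hp0 : 0 ≤ p) (hp1 : p ≤ 1) {m : ℕ} (hm : 2 ≤ m) :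
    |bernoulliCentralMoment p m| ≤ p := by
  have h1 : (1 - p) ^ m ≤ 1 - p := pow_le_of_le_one (by linarith) (by linarith) (by omega)
  have h2 : p ^ m ≤ p ^ 2 := pow_le_pow_of_le_one hp0 hp1 hm
  calc |bernoulliCentralMoment p m| ≤ p * (1 - p) ^ m + (1 - p) * p ^ m := by
        refine (abs_add_le _ _).trans_eq ?_
        rw [abs_mul, abs_mul, abs_pow, abs_pow, abs_neg, abs_of_nonneg hp0,
          abs_of_nonneg (by linarith : 0 ≤ 1 - p)]
    _ ≤ p * (1 - p) + (1 - p) * p ^ 2 := by gcongr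
    _ ≤ p := by nlinarith

lemma walkProd_centeredMask (ω : Fin d × Fin d → Bool) {m : ℕ} (s : Fin (m + 1) → Fin d) :
    walkProd (centeredMask p ω) s = ∏ e, ((if ω e then 1 else 0) - p) ^ edgeMult s e := by
  rw [walkProd, ← prod_fiberwise univ (walkEdge s)]
  refine prod_congr rfl fun e _ => ?_
  rw [edgeMult, ← prod_const]
  refine prod_congr rfl fun t ht => ?_
  rw [← (mem_filter.mp ht).2]
  rfl

lemma integral_walkProd_centeredMask (hp0 : 0 ≤ p) (hp1 : p ≤ 1) {m : ℕ}
    (s : Fin (m + 1) → Fin d) :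
    ∫ ω, walkProd (centeredMask p ω) s ∂omegaMeasure d p hp1 =
      ∏ e, bernoulliCentralMoment p (edgeMult s e) := by
  simp_rw [walkProd_centeredMask]
  rw [integral_prod_omegaMeasure hp0 hp1 fun e b => ((if b then 1 else 0) - p) ^ edgeMult s e]
  simp [bernoulliCentralMoment]

/-- The expected weight vanishes unless every edge is traversed at least twice; such a walk has
at most `k` edges, hence at most `k + 1` vertices. -/
lemma integral_walkProd_centeredMask_le (hp0 : 0 ≤ p) (hp1 : p ≤ 1) {k : ℕ}
    (s : Fin (2 * k + 1) → Fin d) :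
    ∫ ω, walkProd (centeredMask p ω) s ∂omegaMeasure d p hp1 ≤
      if #(univ.image s) ≤ k + 1 then p ^ (#(univ.image s) - 1) else 0 := by
  have hbound_nonneg : 0 ≤ if #(univ.image s) ≤ k + 1 then p ^ (#(univ.image s) - 1) else 0 := by
    split_ifs <;> positivity
  rw [integral_walkProd_centeredMask hp0 hp1]
  by_cases hs : ∀ t, edgeMult s (walkEdge s t) ≠ 1
  swap
  · push Not at hs
    obtain ⟨t, ht⟩ := hs
    rw [prod_eq_zero (mem_univ (walkEdge s t)) (by simp [ht, bernoulliCentralMoment]; ring)]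
    exact hbound_nonneg
  have hE := two_mul_card_walkEdges_le hs
  have hV := card_image_le_card_walkEdges_add_one s
  rw [if_pos (by omega), ← prod_subset (subset_univ (univ.image (walkEdge s))) fun e _ he => by
    simp [edgeMult_eq_zero_of_notMem he, bernoulliCentralMoment]]
  calc ∏ e ∈ univ.image (walkEdge s), bernoulliCentralMoment p (edgeMult s e)
      ≤ ∏ e ∈ univ.image (walkEdge s), p := by
        refine (le_abs_self _).trans ?_
        rw [abs_prod]
        refine prod_le_prod (fun _ _ => abs_nonneg _) fun e he => ?_
        obtain ⟨t, -, rfl⟩ := mem_image.mp he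
        have := edgeMult_walkEdge_pos s t
        exact abs_bernoulliCentralMoment_le hp0 hp1 (by have := hs t; omega)
    _ ≤ p ^ (#(univ.image s) - 1) := by
        rw [prod_const]
        exact pow_le_pow_of_le_one hp0 hp1 (by omega)

lemma card_walks_mul_pow_le (hp0 : 0 ≤ p) (hpd : 1 ≤ p * d) {k v : ℕ} (hv : v ≤ k + 1) :
    (#{s : Fin (2 * k + 1) → Fin d | #(univ.image s) = v} : ℝ) * p ^ (v - 1) ≤
      d * (p * d) ^ k * (k + 2) ^ (2 * k + 1) := by
  have hcount : (#{s : Fin (2 * k + 1) → Fin d | #(univ.image s) = v} : ℝ) ≤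
      d ^ v * v ^ (2 * k + 1) := by exact_mod_cast card_filter_card_image_eq_le _ v
  rcases Nat.eq_zero_or_pos v with rfl | hv0
  · simp only [Nat.cast_zero, zero_pow (Nat.succ_ne_zero _), mul_zero] at hcount
    rw [le_antisymm hcount (Nat.cast_nonneg _), zero_mul]
    have := zero_le_one.trans hpd
    positivity
  calc (#{s : Fin (2 * k + 1) → Fin d | #(univ.image s) = v} : ℝ) * p ^ (v - 1)
      ≤ d ^ v * v ^ (2 * k + 1) * p ^ (v - 1) := by gcongr
    _ = d * (p * d) ^ (v - 1) * v ^ (2 * k + 1) := by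
      rw [mul_pow, ← Nat.sub_add_cancel hv0, pow_succ]
      simp only [Nat.add_sub_cancel]
      ring
    _ ≤ d * (p * d) ^ k * (k + 2) ^ (2 * k + 1) := by
      gcongr
      · omega
      · exact_mod_cast hv.trans (Nat.le_succ _)

lemma integral_trace_pow_centeredMask_le (hp0 : 0 ≤ p) (hp1 : p ≤ 1) (hpd : 1 ≤ p * d) (k : ℕ) :
    ∫ ω, ((centeredMask p ω) ^ (2 * k)).trace ∂omegaMeasure d p hp1 ≤
      d * (p * d) ^ k * (k + 2) ^ (2 * k + 2) := by
  simp_rw [trace_pow_eq_sum_walkProd]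
  rw [integral_finsetSum _ fun s _ => .of_finite]
  calc ∑ s : Fin (2 * k + 1) → Fin d, ∫ ω, (if s (Fin.last _) = s 0 then
          walkProd (centeredMask p ω) s else 0) ∂omegaMeasure d p hp1
      ≤ ∑ s : Fin (2 * k + 1) → Fin d, ∑ v ∈ range (k + 2),
          if #(univ.image s) = v then p ^ (v - 1) else 0 := by
        refine sum_le_sum fun s _ => ?_
        have hbound := integral_walkProd_centeredMask_le hp0 hp1 s
        simp only [sum_ite_eq, mem_range, Nat.lt_succ_iff]
        split_ifs at hbound ⊢ <;> simp_all
    _ = ∑ v ∈ range (k + 2), (#{s : Fin (2 * k + 1) → Fin d | #(univ.image s) = v} : ℝ) *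
          p ^ (v - 1) := by
        rw [sum_comm]
        simp [sum_ite, sum_const]
    _ ≤ ∑ v ∈ range (k + 2), (d * (p * d) ^ k * (k + 2) ^ (2 * k + 1) : ℝ) :=
        sum_le_sum fun v hv =>
          card_walks_mul_pow_le hp0 hpd (Nat.lt_succ_iff.mp (mem_range.mp hv))
    _ = d * (p * d) ^ k * (k + 2) ^ (2 * k + 2) := by
        rw [sum_const, card_range, nsmul_eq_mul]
        push_cast
        ring

lemma trace_pow_centeredMask_nonneg (p : ℝ) (ω : Fin d × Fin d → Bool) (k : ℕ) :
    0 ≤ ((centeredMask p ω) ^ (2 * k)).trace := by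
  have hsymm : ((centeredMask p ω) ^ k)ᵀ = (centeredMask p ω) ^ k := by
    rw [transpose_pow, centeredMask_transpose]
  rw [two_mul, pow_add, ← frobNorm_sq_of_transpose_eq hsymm]
  positivity

lemma omegaMeasure_lt_trace_pow_le (hp0 : 0 ≤ p) (hp1 : p ≤ 1) (hpd : 1 ≤ p * d) (k : ℕ)
    {ε : ℝ} (hε : 0 < ε) :
    omegaMeasure d p hp1 {ω | ε < ((centeredMask p ω) ^ (2 * k)).trace} ≤
      ENNReal.ofReal (d * (p * d) ^ k * (k + 2) ^ (2 * k + 2) / ε) := by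
  have hmarkov := mul_meas_ge_le_integral_of_nonneg (μ := omegaMeasure d p hp1)
    (.of_forall fun ω => trace_pow_centeredMask_nonneg p ω k) .of_finite ε
  calc omegaMeasure d p hp1 {ω | ε < ((centeredMask p ω) ^ (2 * k)).trace}
      ≤ omegaMeasure d p hp1 {ω | ε ≤ ((centeredMask p ω) ^ (2 * k)).trace} :=
        measure_mono (Set.ofPred_subset_ofPred.mpr fun _ => le_of_lt)
    _ = ENNReal.ofReal ((omegaMeasure d p hp1).real
          {ω | ε ≤ ((centeredMask p ω) ^ (2 * k)).trace}) :=
        (ofReal_measureReal (measure_ne_top _ _)).symm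
    _ ≤ _ := by
        refine ENNReal.ofReal_le_ofReal ((le_div_iff₀' hε).mpr ?_)
        exact hmarkov.trans (integral_trace_pow_centeredMask_le hp0 hp1 hpd k)

lemma one_sub_inv_le_omegaMeasure_centeredMask_bounded (hp0 : 0 ≤ p)
    (hp1 : p ≤ 1) (hpd : 1 ≤ p * d) (hL : 4 ≤ Real.log d) :
    1 - 1 / (d : ENNReal) ≤ omegaMeasure d p hp1
      {ω | ∀ u, vnorm (centeredMask p ω *ᵥ u) ≤ 27 * Real.log d * √(p * d) * vnorm u} := by
  set L := Real.log d
  have hd : (0 : ℝ) < d := by nlinarith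
  obtain ⟨n, hn1, hn2⟩ := exists_nat_pow_near (by linarith : (1 : ℝ) ≤ L) one_lt_two
  -- `k ∈ [L, 2L]` is a power of two, as `vnorm_mulVec_le_of_trace_pow_le` requires.
  set k := 2 ^ (n + 1)
  have hLk : L ≤ k := by push_cast [k]; exact hn2.le
  have hkL : (k : ℝ) ≤ 2 * L := by push_cast [k]; rw [pow_succ]; linarith
  set T := 27 * L * √(p * d)
  have hT : 0 ≤ T := by positivity
  have hbad : omegaMeasure d p hp1 {ω | T ^ (2 * k) < ((centeredMask p ω) ^ (2 * k)).trace} ≤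
      1 / d := by
    refine (omegaMeasure_lt_trace_pow_le hp0 hp1 hpd k (by positivity)).trans ?_
    rw [one_div, ← ENNReal.ofReal_natCast, ← ENNReal.ofReal_inv_of_pos hd]
    refine ENNReal.ofReal_le_ofReal ?_
    have hTpow : T ^ (2 * k) = (27 * L) ^ (2 * k) * (p * d) ^ k := by
      rw [mul_pow, pow_mul (√(p * d)), Real.sq_sqrt (by positivity)]
    have hnum := exp_sq_mul_pow_le (by linarith) hLk hkL
    rw [Real.exp_log hd] at hnum
    rw [hTpow, div_le_iff₀ (by positivity), inv_mul_eq_div, le_div_iff₀ hd]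
    nlinarith [pow_pos (zero_lt_one.trans_le hpd) k]
  calc 1 - 1 / (d : ENNReal)
      ≤ 1 - omegaMeasure d p hp1 {ω | T ^ (2 * k) < ((centeredMask p ω) ^ (2 * k)).trace} :=
        tsub_le_tsub_left hbad 1
    _ = omegaMeasure d p hp1 {ω | T ^ (2 * k) < ((centeredMask p ω) ^ (2 * k)).trace}ᶜ :=
        (prob_compl_eq_one_sub (Set.to_countable _).measurableSet).symm
    _ ≤ _ := measure_mono fun ω hω u =>
        vnorm_mulVec_le_of_trace_pow_le (centeredMask_transpose p ω) (n + 1) hT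
          (not_lt.mp hω) u

end RandomMask

section FirstOrderCondition

variable {d : ℕ}

/-- `P_Ω(A) = p A + D ∘ A` for `D = centeredMask p ω`, and `(D ∘ zzᵀ) x = z ∘ D (z ∘ x)`. -/
lemma projO_mulVec_eq (p : ℝ) (ω : Fin d × Fin d → Bool) (z x : Fin d → ℝ) :
    projO ω (outer z z - outer x x) *ᵥ x =
      p • ((z ⬝ᵥ x) • z - (x ⬝ᵥ x) • x) +
        (z * (centeredMask p ω *ᵥ (z * x)) - x * (centeredMask p ω *ᵥ (x * x))) := by
  ext i
  simp only [mulVec, dotProduct, projO, outer, centeredMask, Pi.add_apply, Pi.sub_apply,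
    Pi.smul_apply, Pi.mul_apply, smul_eq_mul, Matrix.sub_apply, sum_mul, mul_sum, ← sum_sub_distrib,
    ← sum_add_distrib]
  refine sum_congr rfl fun j _ => ?_
  split_ifs <;> ring

lemma mul_vnorm_residual_le {p T a b : ℝ} {ω : Fin d × Fin d → Bool} {z x : Fin d → ℝ}
    (hp : 0 ≤ p) (hT : 0 ≤ T) (ha : 0 ≤ a) (hb : 0 ≤ b)
    (hop : ∀ u, vnorm (centeredMask p ω *ᵥ u) ≤ T * vnorm u)
    (hz : ∀ i, |z i| ≤ a) (hx : ∀ i, |x i| ≤ b)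
    (hfoc : projO ω (outer z z - outer x x) *ᵥ x = 0) :
    p * vnorm ((z ⬝ᵥ x) • z - vnorm x ^ 2 • x) ≤ T * (a ^ 2 + b ^ 2) * vnorm x := by
  have hres : p • ((z ⬝ᵥ x) • z - (x ⬝ᵥ x) • x) =
      x * (centeredMask p ω *ᵥ (x * x)) - z * (centeredMask p ω *ᵥ (z * x)) := by
    linear_combination (projO_mulVec_eq p ω z x).symm.trans hfoc
  rw [vnorm_sq, ← abs_of_nonneg hp, ← vnorm_smul, hres]
  calc vnorm (x * (centeredMask p ω *ᵥ (x * x)) - z * (centeredMask p ω *ᵥ (z * x)))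
      ≤ b * (T * (b * vnorm x)) + a * (T * (a * vnorm x)) := by
        refine (vnorm_sub_le _ _).trans (add_le_add ?_ ?_)
        · refine (vnorm_mul_le hb hx).trans (mul_le_mul_of_nonneg_left ?_ hb)
          exact (hop _).trans (mul_le_mul_of_nonneg_left (vnorm_mul_le hb hx) hT)
        · refine (vnorm_mul_le ha hz).trans (mul_le_mul_of_nonneg_left ?_ ha)
          exact (hop _).trans (mul_le_mul_of_nonneg_left (vnorm_mul_le ha hz) hT)
    _ = T * (a ^ 2 + b ^ 2) * vnorm x := by ring

lemma vnorm_residual_le {p T μ : ℝ} {ω : Fin d × Fin d → Bool} {z x : Fin d → ℝ}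
    (hd : 0 < d) (hp : 0 < p) (hT : 0 ≤ T) (hμ : 0 ≤ μ)
    (hop : ∀ u, vnorm (centeredMask p ω *ᵥ u) ≤ T * vnorm u)
    (hz : ∀ i, |z i| ≤ μ / √d) (hx : ∀ i, |x i| ≤ 2 * μ / √d) (hx1 : vnorm x ≤ 1)
    (hfoc : projO ω (outer z z - outer x x) *ᵥ x = 0) :
    vnorm ((z ⬝ᵥ x) • z - vnorm x ^ 2 • x) ≤ 5 * μ ^ 2 * T / (p * d) := by
  have hd0 : (0 : ℝ) < d := Nat.cast_pos.mpr hd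
  have hres := mul_vnorm_residual_le hp.le hT (by positivity) (by positivity) hop hz hx hfoc
  have hinc : (μ / √d) ^ 2 + (2 * μ / √d) ^ 2 = 5 * μ ^ 2 / d := by
    rw [div_pow, div_pow, Real.sq_sqrt hd0.le]; ring
  rw [hinc] at hres
  rw [le_div_iff₀ (by positivity)]
  calc vnorm ((z ⬝ᵥ x) • z - vnorm x ^ 2 • x) * (p * d)
      = d * (p * vnorm ((z ⬝ᵥ x) • z - vnorm x ^ 2 • x)) := by ring
    _ ≤ d * (T * (5 * μ ^ 2 / d)) :=
        mul_le_mul_of_nonneg_left (hres.trans (mul_le_of_le_one_right (by positivity) hx1))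
          hd0.le
    _ = 5 * μ ^ 2 * T := by field_simp

end FirstOrderCondition

/-- there are absolute constants `c, C > 0` such that if
`p ≥ c μ⁶ log^{1.5} d / d`, then with probability at least `1 − 1/d` over `Ω`, every
incoherent `x` (`‖x‖_∞ ≤ 2μ/√d`, `‖x‖₂ ≤ 1`) satisfying the (regularizer-free)
first-order condition `P_Ω(zzᵀ − xxᵀ)x = 0` satisfies
`‖⟨z,x⟩z − ‖x‖²x‖ ≤ C μ³ log d (pd)^{−1/2}`. -/
theorem stmt6 :
    ∃ c C : ℝ, 0 < c ∧ 0 < C ∧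
      ∀ (d : ℕ), 0 < d →
      ∀ (μ p : ℝ) (z : Fin d → ℝ),
        0 < μ → 0 < p → ∀ (hp1 : p ≤ 1),
        vnorm z = 1 → (∀ i, |z i| ≤ μ / Real.sqrt d) →
        c * μ ^ 6 * Real.log d ^ ((3 : ℝ) / 2) / d ≤ p →
        1 - 1 / (d : ENNReal) ≤
          omegaMeasure d p hp1
            {ω | ∀ x : Fin d → ℝ,
              (∀ i, |x i| ≤ 2 * μ / Real.sqrt d) → vnorm x ≤ 1 →
              (projO ω (outer z z - outer x x)).mulVec x = 0 →
              vnorm ((z ⬝ᵥ x) • z - vnorm x ^ 2 • x) ≤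
                C * μ ^ 3 * Real.log d / Real.sqrt (p * d)} := by
  refine ⟨256, 135, by norm_num, by norm_num, fun d hd μ p z hμ hp hp1 hz hzinc hpc => ?_⟩
  obtain rfl | hd2 : d = 1 ∨ 2 ≤ d := by omega
  · simp
  have hμ1 : 1 ≤ μ := by nlinarith [one_le_sq_of_vnorm_eq_one hz hzinc]
  have hd0 : (0 : ℝ) < d := by positivity
  have hpd : 64 ≤ p * d := by
    rw [div_le_iff₀ hd0] at hpc
    nlinarith [quarter_le_log_rpow hd2, one_le_pow₀ (n := 6) hμ1]
  have hL : 4 ≤ Real.log d := by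
    rw [Real.le_log_iff_exp_le hd0]
    nlinarith [exp_four_lt]
  refine (one_sub_inv_le_omegaMeasure_centeredMask_bounded hp.le hp1 (by linarith) hL).trans
    (measure_mono fun ω hω x hx hx1 hfoc => ?_)
  set s := √(p * d)
  have hs : s ^ 2 = p * d := Real.sq_sqrt (by positivity)
  calc vnorm ((z ⬝ᵥ x) • z - vnorm x ^ 2 • x)
      ≤ 5 * μ ^ 2 * (27 * Real.log d * s) / (p * d) :=
        vnorm_residual_le hd hp (by positivity) hμ.le hω hzinc hx hx1 hfoc
    _ = 135 * μ ^ 2 * Real.log d / s := by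
        rw [← hs]; field_simp; ring
    _ ≤ 135 * μ ^ 3 * Real.log d / s := by
        gcongr
        norm_num
end
end

section
/- Let x ∈ ℝ^d satisfy the first-order optimality condition 2P_Ω(M − xxᵀ)x = λ∇R(x), and let i* = argmax_j |x_j|. Suppose the set S_{i*} = {j : (i*, j) ∈ Ω} of observed entries in row i* satisfies |S_{i*}| ≤ 2pd. Then ‖x‖_∞ ≤ 4·max{α, μ·√(p/λ)}. -/
open Matrix Finset

noncomputable section

/-- `P_Ω` for a fixed (finite) set of observed entries. -/
def projF {d : ℕ} (Ω : Finset (Fin d × Fin d)) (A : Matrix (Fin d) (Fin d) ℝ) :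
    Matrix (Fin d) (Fin d) ℝ :=
  fun i j => if (i, j) ∈ Ω then A i j else 0

/-! At the largest coordinate `i*`, multiplying the `i*`-th row of the optimality
condition by `sign x_{i*}` turns its right-hand side into `4λ(‖x‖_∞ − α)³`, while on the left
the `-xxᵀ` part only contributes nonpositive terms and the incoherence of `z` bounds each of
the at most `2pd` remaining terms by `(μ²/d)‖x‖_∞`. Hence `λ(‖x‖_∞ − α)³ ≤ pμ²‖x‖_∞`, and this
cubic inequality is violated once `‖x‖_∞ > 4α` and `‖x‖_∞² > 16 μ² p / λ`. -/

namespace Real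

theorem mul_sign_eq_abs (r : ℝ) : r * sign r = |r| := by
  rcases lt_trichotomy r 0 with h | rfl | h
  · rw [sign_of_neg h, abs_of_neg h, mul_neg_one]
  · simp
  · rw [sign_of_pos h, abs_of_pos h, mul_one]

theorem sign_mul_sign_of_ne_zero {r : ℝ} (hr : r ≠ 0) : sign r * sign r = 1 := by
  rcases sign_apply_eq_of_ne_zero r hr with h | h <;> rw [h] <;> norm_num

theorem abs_sign_le_one (r : ℝ) : |sign r| ≤ 1 := by
  rcases sign_apply_eq r with h | h | h <;> rw [h] <;> norm_num

end Real

theorem gradR_mul_sign {d : ℕ} {α : ℝ} {x : Fin d → ℝ} {i : Fin d} (hα : α ≤ |x i|)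
    (hx : x i ≠ 0) : gradR α x i * Real.sign (x i) = 4 * (|x i| - α) ^ 3 := by
  rw [gradR, if_pos hα, mul_assoc, Real.sign_mul_sign_of_ne_zero hx, mul_one]

theorem sub_outer_mul_sign_le {d : ℕ} {z x : Fin d → ℝ} {i j : Fin d} {c : ℝ}
    (hz : ∀ k, |z k| ≤ c) (hxj : |x j| ≤ |x i|) :
    (outer z z - outer x x) i j * x j * Real.sign (x i) ≤ c ^ 2 * |x i| := by
  have hc : 0 ≤ c := (abs_nonneg _).trans (hz i)
  have hzz : z i * z j * (x j * Real.sign (x i)) ≤ c ^ 2 * |x i| :=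
    calc z i * z j * (x j * Real.sign (x i))
        ≤ |z i| * |z j| * (|x j| * |Real.sign (x i)|) := by
          simpa only [abs_mul] using le_abs_self (z i * z j * (x j * Real.sign (x i)))
      _ ≤ c * c * (|x i| * 1) := by
          gcongr
          exacts [hz i, hz j, Real.abs_sign_le_one _]
      _ = c ^ 2 * |x i| := by ring
  have hsplit : (outer z z - outer x x) i j * x j * Real.sign (x i)
      = z i * z j * (x j * Real.sign (x i)) - x j ^ 2 * (x i * Real.sign (x i)) := by
    simp only [Matrix.sub_apply, outer]; ring
  rw [hsplit, Real.mul_sign_eq_abs]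
  nlinarith [sq_nonneg (x j), abs_nonneg (x i)]

theorem projF_sub_outer_mulVec_mul_sign_le {d : ℕ} (Ω : Finset (Fin d × Fin d))
    {z x : Fin d → ℝ} {i : Fin d} {c : ℝ} (hz : ∀ k, |z k| ≤ c) (hmax : ∀ j, |x j| ≤ |x i|) :
    (projF Ω (outer z z - outer x x)).mulVec x i * Real.sign (x i)
      ≤ #{j | (i, j) ∈ Ω} * (c ^ 2 * |x i|) := by
  rw [← nsmul_eq_mul, ← sum_const, sum_filter, mulVec, dotProduct, sum_mul]
  refine sum_le_sum fun j _ => ?_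
  by_cases hj : (i, j) ∈ Ω
  · simpa only [projF, if_pos hj] using sub_outer_mul_sign_le hz (hmax j)
  · simp only [projF, if_neg hj, zero_mul, le_refl]

theorem le_four_mul_max_of_cube_le {B α μ lam p : ℝ} (hα : 0 < α) (hμ : 0 ≤ μ) (hlam : 0 < lam)
    (hp : 0 ≤ p) (hcube : α ≤ B → lam * (B - α) ^ 3 ≤ p * μ ^ 2 * B) :
    B ≤ 4 * max α (μ * Real.sqrt (p / lam)) := by
  set r := Real.sqrt (p / lam)
  by_contra! hB
  have hαB : 4 * α < B := (mul_le_mul_of_nonneg_left (le_max_left _ _) zero_le_four).trans_lt hB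
  have hrB : 4 * (μ * r) < B :=
    (mul_le_mul_of_nonneg_left (le_max_right _ _) zero_le_four).trans_lt hB
  have hpr : p = lam * r ^ 2 := by
    rw [Real.sq_sqrt (div_nonneg hp hlam.le), mul_div_cancel₀ _ hlam.ne']
  have hμr : 0 ≤ μ * r := mul_nonneg hμ (Real.sqrt_nonneg _)
  have hBpos : 0 < B := by linarith
  have hlow : (3 * B / 4) ^ 3 ≤ (B - α) ^ 3 := by gcongr; linarith
  have hup : (μ * r) ^ 2 < (B / 4) ^ 2 := by gcongr; linarith
  have key := hcube (by linarith)
  rw [hpr] at key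
  -- `27/64 · λB³ ≤ λ(B - α)³ ≤ λ(μr)²B < 1/16 · λB³`
  nlinarith [mul_le_mul_of_nonneg_left hlow hlam.le, mul_lt_mul_of_pos_left hup (mul_pos hlam hBpos)]

theorem stmt8_general (d : ℕ) (μ α lam p : ℝ)
    (hμ : 0 < μ) (hα : 0 < α) (hlam : 0 < lam) (hp : 0 < p)
    (z : Fin d → ℝ) (hzinf : ∀ i, |z i| ≤ μ / Real.sqrt d)
    (Ω : Finset (Fin d × Fin d))
    (x : Fin d → ℝ)
    (hfoc : (2 : ℝ) • (projF Ω (outer z z - outer x x)).mulVec x = lam • gradR α x)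
    (istar : Fin d) (hmax : ∀ j, |x j| ≤ |x istar|)
    (hS : ((Finset.univ.filter fun j => (istar, j) ∈ Ω).card : ℝ) ≤ 2 * p * d) :
    ∀ j, |x j| ≤ 4 * max α (μ * Real.sqrt (p / lam)) := by
  intro j
  refine (hmax j).trans (le_four_mul_max_of_cube_le hα hμ.le hlam hp.le fun hαB => ?_)
  have hx : x istar ≠ 0 := abs_pos.mp (hα.trans_le hαB)
  have hd : (0 : ℝ) < d := Nat.cast_pos.mpr istar.pos
  have hrow := projF_sub_outer_mulVec_mul_sign_le Ω hzinf hmax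
  have hfoc_i : 2 * (projF Ω (outer z z - outer x x)).mulVec x istar = lam * gradR α x istar := by
    simpa only [Pi.smul_apply, smul_eq_mul] using congrFun hfoc istar
  have hμd : (μ / Real.sqrt d) ^ 2 = μ ^ 2 / d := by rw [div_pow, Real.sq_sqrt hd.le]
  calc lam * (|x istar| - α) ^ 3
      = (2 * (projF Ω (outer z z - outer x x)).mulVec x istar * Real.sign (x istar)) / 4 := by
        rw [hfoc_i, mul_assoc, gradR_mul_sign hαB hx]; ring
    _ ≤ (2 * (#{j | (istar, j) ∈ Ω} * (μ ^ 2 / d * |x istar|))) / 4 := by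
        rw [mul_assoc 2, ← hμd]
        gcongr
    _ ≤ (2 * (2 * p * d * (μ ^ 2 / d * |x istar|))) / 4 := by gcongr
    _ = p * μ ^ 2 * |x istar| := by field_simp; ring

/-- if `x` satisfies the first-order optimality condition and the row of the
coordinate of largest absolute value has at most `2pd` observed entries, then
`‖x‖_∞ ≤ 4 max{α, μ√(p/λ)}`. -/
theorem stmt8 (d : ℕ) (hd : 0 < d) (μ α lam p : ℝ)
    (hμ : 0 < μ) (hα : 0 < α) (hlam : 0 < lam) (hp : 0 < p) (hp1 : p ≤ 1)
    (z : Fin d → ℝ) (hz : vnorm z = 1) (hzinf : ∀ i, |z i| ≤ μ / Real.sqrt d)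
    (Ω : Finset (Fin d × Fin d)) (hsym : ∀ i j : Fin d, (i, j) ∈ Ω ↔ (j, i) ∈ Ω)
    (x : Fin d → ℝ)
    (hfoc : (2 : ℝ) • (projF Ω (outer z z - outer x x)).mulVec x = lam • gradR α x)
    (istar : Fin d) (hmax : ∀ j, |x j| ≤ |x istar|)
    (hS : ((Finset.univ.filter fun j => (istar, j) ∈ Ω).card : ℝ) ≤ 2 * p * d) :
    ∀ j, |x j| ≤ 4 * max α (μ * Real.sqrt (p / lam)) :=
  stmt8_general d μ α lam p hμ hα hlam hp z hzinf Ω x hfoc istar hmax hS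
end
end

section
/- There exists an absolute constant c such that if p ≥ c·μ⁶·log^{1.5}(d)/d, α = 10μ/√d, and λ ≥ μ²p/α², then with probability at least 1 − 1/d over the random choice of Ω the following holds: every x ∈ B' = {x ∈ ℝ^d : ‖x‖_∞ ≤ 4α} satisfying the second-order optimality condition (for all v ∈ ℝ^d, ‖P_Ω(vxᵀ + xvᵀ)‖_F² + λvᵀ∇²R(x)v ≥ 2vᵀP_Ω(zzᵀ − xxᵀ)v) satisfies ‖x‖₂² ≥ 1/8. -/
open Matrix Finset MeasureTheory

noncomputable section

/-!
Let `v` be `z` restricted to the coordinates where `|xᵢ| < α`. The Hessian of the regularizer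
vanishes along `v`, so the second-order condition in the direction `v` reads
`∑ Ωᵢⱼ vᵢ² vⱼ² ≤ 3 ∑ Ωᵢⱼ vᵢ² xⱼ²`. On the event that every row sum `∑ⱼ Ωᵢⱼ zⱼ²` is below `6p/5`
and the total `∑ Ωᵢⱼ zᵢ² zⱼ²` is above `9p/10`, the right side is at most `(18/5) p ‖x‖²` and the
left side at least `9p/10 - (12/5) p ∑ (zᵢ² - vᵢ²)`; incoherence gives `zᵢ² ≤ α²/100 ≤ xᵢ²/100`
wherever `vᵢ ≠ zᵢ`, hence `‖x‖² > 1/5`. Both sums are weighted sums of the independent bits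
attached to unordered pairs, with weights at most `2μ²/d` and `2μ⁴/d²`, so Chernoff bounds make the
event fail with probability at most `d e^{-pd/200μ²} + e^{-pd²/800μ⁴} ≤ 1/d`.
-/

namespace MatrixCompletion

open Real ProbabilityTheory

section Chernoff

variable {ι : Type*} [Fintype ι] {p : ℝ} {hp1 : p ≤ 1}

set_option linter.deprecated false in
noncomputable def bernoulliPi (ι : Type*) [Fintype ι] (p : ℝ) (hp1 : p ≤ 1) : Measure (ι → Bool) :=
  Measure.pi fun _ => (PMF.bernoulli (Real.toNNReal p) (Real.toNNReal_le_one.mpr hp1)).toMeasure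

instance : IsProbabilityMeasure (bernoulliPi ι p hp1) := by
  unfold bernoulliPi; infer_instance

def weightedSum (w : ι → ℝ) (ω : ι → Bool) : ℝ := ∑ k, if ω k then w k else 0

set_option linter.deprecated false in
lemma mgf_weightedSum (hp0 : 0 ≤ p) (w : ι → ℝ) (t : ℝ) :
    mgf (weightedSum w) (bernoulliPi ι p hp1) t = ∏ k, (1 - p + p * exp (t * w k)) := by
  have hexp : ∀ ω : ι → Bool,
      exp (t * weightedSum w ω) = ∏ k, if ω k then exp (t * w k) else 1 := by
    intro ω
    rw [weightedSum, mul_sum, exp_sum]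
    exact prod_congr rfl fun k _ => by split_ifs <;> simp
  simp_rw [mgf, hexp]
  rw [bernoulliPi,
    integral_fintype_prod_eq_prod (fun k (b : Bool) => if b then exp (t * w k) else 1)]
  refine prod_congr rfl fun k _ => ?_
  rw [PMF.integral_eq_sum, Fintype.sum_bool]
  simp [PMF.bernoulli_apply, hp0, hp1]
  ring

lemma mgf_weightedSum_le (hp0 : 0 ≤ p) {w : ι → ℝ} {W t : ℝ} (hw0 : ∀ k, 0 ≤ w k)
    (hwW : ∀ k, w k ≤ W) (hw1 : ∑ k, w k = 1) (ht : |t| * W ≤ 1) :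
    mgf (weightedSum w) (bernoulliPi ι p hp1) t ≤ exp (p * (t + t ^ 2 * W)) := by
  have hfactor : ∀ k, 1 - p + p * exp (t * w k) ≤ exp (p * (t + t ^ 2 * W) * w k) := by
    intro k
    have htw : |t * w k| ≤ 1 := by
      rw [abs_mul, abs_of_nonneg (hw0 k)]
      exact le_trans (mul_le_mul_of_nonneg_left (hwW k) (abs_nonneg t)) ht
    -- `e^u ≤ 1 + u + u²` for `|u| ≤ 1`, and `(t w)² ≤ t² W w`
    have hquad : exp (t * w k) - 1 ≤ (t + t ^ 2 * W) * w k := by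
      have := (abs_le.mp (abs_exp_sub_one_sub_id_le htw)).2
      nlinarith [mul_le_mul_of_nonneg_left (hwW k) (mul_nonneg (sq_nonneg t) (hw0 k))]
    have := add_one_le_exp (p * (t + t ^ 2 * W) * w k)
    nlinarith [mul_le_mul_of_nonneg_left hquad hp0]
  calc mgf (weightedSum w) (bernoulliPi ι p hp1) t = ∏ k, (1 - p + p * exp (t * w k)) :=
        mgf_weightedSum hp0 w t
    _ ≤ ∏ k, exp (p * (t + t ^ 2 * W) * w k) :=
        prod_le_prod (fun k _ => by nlinarith [exp_pos (t * w k)]) fun k _ => hfactor k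
    _ = exp (p * (t + t ^ 2 * W)) := by rw [← exp_sum, ← mul_sum, hw1, mul_one]

variable {w : ι → ℝ} {W δ : ℝ}

lemma bernoulliPi_upper_tail (hp0 : 0 ≤ p) (hw0 : ∀ k, 0 ≤ w k) (hwW : ∀ k, w k ≤ W)
    (hw1 : ∑ k, w k = 1) (hW : 0 < W) (hδ0 : 0 ≤ δ) (hδ2 : δ ≤ 2) :
    (bernoulliPi ι p hp1).real {ω | (1 + δ) * p ≤ weightedSum w ω} ≤
      exp (-(δ ^ 2 * p / (4 * W))) := by
  -- `t = δ / (2W)` minimizes the exponent `p (t² W - t δ)`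
  have ht0 : 0 ≤ δ / (2 * W) := by positivity
  have ht : |δ / (2 * W)| * W ≤ 1 := by
    rw [abs_of_nonneg ht0, div_mul_eq_mul_div, div_le_one (by positivity)]; nlinarith
  refine (measure_ge_le_exp_mul_mgf _ ht0 Integrable.of_finite).trans ?_
  grw [mgf_weightedSum_le hp0 hw0 hwW hw1 ht, ← exp_add]
  exact le_of_eq (congrArg exp (by field_simp; ring))

lemma bernoulliPi_lower_tail (hp0 : 0 ≤ p) (hw0 : ∀ k, 0 ≤ w k) (hwW : ∀ k, w k ≤ W)
    (hw1 : ∑ k, w k = 1) (hW : 0 < W) (hδ0 : 0 ≤ δ) (hδ2 : δ ≤ 2) :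
    (bernoulliPi ι p hp1).real {ω | weightedSum w ω ≤ (1 - δ) * p} ≤
      exp (-(δ ^ 2 * p / (4 * W))) := by
  have ht0 : -(δ / (2 * W)) ≤ 0 := by rw [neg_nonpos]; positivity
  have ht : |-(δ / (2 * W))| * W ≤ 1 := by
    rw [abs_of_nonpos ht0, neg_neg, div_mul_eq_mul_div, div_le_one (by positivity)]; nlinarith
  refine (measure_le_le_exp_mul_mgf _ ht0 Integrable.of_finite).trans ?_
  grw [mgf_weightedSum_le hp0 hw0 hwW hw1 ht, ← exp_add]
  exact le_of_eq (congrArg exp (by field_simp; ring))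

end Chernoff

section Pushforward

variable {α ι : Type*} [Fintype α] [DecidableEq ι] (f : α → ι) (g : α → ℝ)

def pushWeight (k : ι) : ℝ := ∑ a with f a = k, g a

lemma sum_ite_comp_eq_weightedSum [Fintype ι] (ω : ι → Bool) :
    ∑ a, (if ω (f a) then g a else 0) = weightedSum (pushWeight f g) ω := by
  rw [weightedSum, ← sum_fiberwise univ f]
  refine sum_congr rfl fun k _ => ?_
  rw [pushWeight]
  split_ifs with h
  · exact sum_congr rfl fun a ha => by rw [(mem_filter.mp ha).2, if_pos h]
  · exact sum_eq_zero fun a ha => by rw [(mem_filter.mp ha).2, if_neg h]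

lemma sum_pushWeight [Fintype ι] : ∑ k, pushWeight f g k = ∑ a, g a := sum_fiberwise univ f g

variable {f g}

lemma pushWeight_nonneg (hg : ∀ a, 0 ≤ g a) (k : ι) : 0 ≤ pushWeight f g k :=
  sum_nonneg fun a _ => hg a

lemma pushWeight_le {m : ℕ} {W : ℝ} (hfib : ∀ k, #{a | f a = k} ≤ m) (hg : ∀ a, g a ≤ W)
    (hW : 0 ≤ W) (k : ι) : pushWeight f g k ≤ m * W := by
  refine (sum_le_card_nsmul _ _ _ fun a _ => hg a).trans ?_
  rw [nsmul_eq_mul]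
  gcongr
  exact_mod_cast hfib k

end Pushforward

section Pattern

variable {α : Type*} [LinearOrder α]

lemma card_filter_minMax_eq_le_two [Fintype α] (i : α) (k : α × α) :
    #{j | (min i j, max i j) = k} ≤ 2 := by
  refine (card_le_card (t := {k.1, k.2}) fun j hj => ?_).trans card_le_two
  obtain rfl := (mem_filter.mp hj).2
  rcases le_total i j with h | h <;> simp [h]

lemma card_filter_pair_minMax_eq_le_two [Fintype α] (k : α × α) :
    #{q : α × α | (min q.1 q.2, max q.1 q.2) = k} ≤ 2 := by
  refine (card_le_card (t := {k, k.swap}) fun q hq => ?_).trans card_le_two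
  obtain rfl := (mem_filter.mp hq).2
  rcases le_total q.1 q.2 with h | h <;> simp [h, Prod.ext_iff]

def sampleMask (ω : α × α → Bool) (i j : α) : ℝ := if ω (min i j, max i j) then 1 else 0

variable (ω : α × α → Bool)

lemma sampleMask_nonneg (i j : α) : 0 ≤ sampleMask ω i j := by
  unfold sampleMask; split_ifs <;> norm_num

lemma sampleMask_comm (i j : α) : sampleMask ω i j = sampleMask ω j i := by
  rw [sampleMask, sampleMask, min_comm, max_comm]

lemma sampleMask_mul (i j : α) (a : ℝ) :
    sampleMask ω i j * a = if ω (min i j, max i j) then a else 0 := by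
  unfold sampleMask; split_ifs <;> simp

lemma sum_sampleMask_mul_eq_weightedSum [Fintype α] (i : α) (g : α → ℝ) :
    ∑ j, sampleMask ω i j * g j = weightedSum (pushWeight (fun j => (min i j, max i j)) g) ω := by
  simp only [sampleMask_mul]
  exact sum_ite_comp_eq_weightedSum _ g ω

lemma sum_sum_sampleMask_mul_eq_weightedSum [Fintype α] (g : α → α → ℝ) :
    ∑ i, ∑ j, sampleMask ω i j * g i j =
      weightedSum (pushWeight (fun q : α × α => (min q.1 q.2, max q.1 q.2)) fun q => g q.1 q.2)
        ω := by
  simp only [sampleMask_mul, ← sum_ite_comp_eq_weightedSum]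
  exact (Fintype.sum_prod_type' fun i j => if ω (min i j, max i j) then g i j else 0).symm

end Pattern

section SamplingTails

variable {α : Type*} [Fintype α] [LinearOrder α] {p W : ℝ} {hp1 : p ≤ 1} {z : α → ℝ}

lemma bernoulliPi_real_row_ge_le (hp0 : 0 ≤ p) (hz1 : ∑ j, z j ^ 2 = 1)
    (hzW : ∀ j, z j ^ 2 ≤ W) (hW : 0 < W) (i : α) :
    (bernoulliPi (α × α) p hp1).real {ω | 6 / 5 * p ≤ ∑ j, sampleMask ω i j * z j ^ 2} ≤
      exp (-(p / (200 * W))) := by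
  have h := bernoulliPi_upper_tail (hp1 := hp1) (δ := 1 / 5) (W := 2 * W) hp0
    (pushWeight_nonneg fun j => sq_nonneg (z j))
    (fun k => by simpa using pushWeight_le (card_filter_minMax_eq_le_two i) hzW hW.le k)
    (by rw [sum_pushWeight, hz1]) (by positivity) (by norm_num) (by norm_num)
  convert h using 3
  · ext ω; rw [sum_sampleMask_mul_eq_weightedSum]; norm_num
  · ring

lemma bernoulliPi_real_total_le_le (hp0 : 0 ≤ p) (hz1 : ∑ j, z j ^ 2 = 1)
    (hzW : ∀ j, z j ^ 2 ≤ W) (hW : 0 < W) :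
    (bernoulliPi (α × α) p hp1).real
        {ω | ∑ i, ∑ j, sampleMask ω i j * (z i ^ 2 * z j ^ 2) ≤ 9 / 10 * p} ≤
      exp (-(p / (800 * W ^ 2))) := by
  have hzz : ∀ q : α × α, z q.1 ^ 2 * z q.2 ^ 2 ≤ W ^ 2 := fun q => by
    rw [sq W]; exact mul_le_mul (hzW _) (hzW _) (sq_nonneg _) hW.le
  have h := bernoulliPi_lower_tail (hp1 := hp1) (δ := 1 / 10) (W := 2 * W ^ 2) hp0
    (pushWeight_nonneg (f := fun q : α × α => (min q.1 q.2, max q.1 q.2))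
      fun q => mul_nonneg (sq_nonneg (z q.1)) (sq_nonneg (z q.2)))
    (fun k => by simpa using pushWeight_le card_filter_pair_minMax_eq_le_two hzz (sq_nonneg W) k)
    (by simp only [sum_pushWeight, Fintype.sum_prod_type, ← sum_mul_sum, hz1, one_mul])
    (by positivity) (by norm_num) (by norm_num)
  convert h using 3
  · ext ω; rw [sum_sum_sampleMask_mul_eq_weightedSum]; norm_num
  · ring

def goodSample (p : ℝ) (z : α → ℝ) : Set (α × α → Bool) :=
  {ω | (∀ i, ∑ j, sampleMask ω i j * z j ^ 2 < 6 / 5 * p) ∧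
    9 / 10 * p < ∑ i, ∑ j, sampleMask ω i j * (z i ^ 2 * z j ^ 2)}

lemma goodSample_compl (p : ℝ) (z : α → ℝ) :
    (goodSample p z)ᶜ = (⋃ i, {ω | 6 / 5 * p ≤ ∑ j, sampleMask ω i j * z j ^ 2}) ∪
      {ω | ∑ i, ∑ j, sampleMask ω i j * (z i ^ 2 * z j ^ 2) ≤ 9 / 10 * p} := by
  ext ω
  simp only [goodSample, Set.mem_compl_iff, Set.mem_ofPred_eq, Set.mem_union, Set.mem_iUnion,
    not_and_or, not_forall, not_lt]

theorem one_sub_le_bernoulliPi_real_goodSample (hp0 : 0 ≤ p) (hz1 : ∑ j, z j ^ 2 = 1)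
    (hzW : ∀ j, z j ^ 2 ≤ W) (hW : 0 < W) :
    1 - (Fintype.card α * exp (-(p / (200 * W))) + exp (-(p / (800 * W ^ 2)))) ≤
      (bernoulliPi (α × α) p hp1).real (goodSample p z) := by
  have hrows : (bernoulliPi (α × α) p hp1).real
      (⋃ i, {ω | 6 / 5 * p ≤ ∑ j, sampleMask ω i j * z j ^ 2}) ≤
        Fintype.card α * exp (-(p / (200 * W))) := by
    refine (measureReal_iUnion_fintype_le _).trans ?_
    simpa using sum_le_card_nsmul univ _ _ fun i _ => bernoulliPi_real_row_ge_le hp0 hz1 hzW hW i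
  have hbad := (measureReal_union_le _ _).trans
    (add_le_add hrows (bernoulliPi_real_total_le_le hp0 hz1 hzW hW))
  rw [← goodSample_compl, probReal_compl_eq_one_sub MeasurableSet.of_discrete] at hbad
  linarith

end SamplingTails

section SecondOrder

variable {ι : Type*} [Fintype ι] {ξ : ι → ι → ℝ}

lemma sum_sum_mul_swap (hξ : ∀ i j, ξ i j = ξ j i) (F : ι → ι → ℝ) :
    ∑ i, ∑ j, ξ i j * F j i = ∑ i, ∑ j, ξ i j * F i j := by
  rw [sum_comm]; simp_rw [hξ]

lemma sum_sum_mul_le_of_row_le {a c : ι → ℝ} {R : ℝ}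
    (hrow : ∀ i, ∑ j, ξ i j * a j ≤ R) (hc : ∀ i, 0 ≤ c i) :
    ∑ i, ∑ j, ξ i j * (c i * a j) ≤ R * ∑ i, c i := by
  rw [mul_sum]
  refine sum_le_sum fun i _ => ?_
  calc ∑ j, ξ i j * (c i * a j) = c i * ∑ j, ξ i j * a j := by
        rw [mul_sum]; exact sum_congr rfl fun j _ => by ring
    _ ≤ c i * R := mul_le_mul_of_nonneg_left (hrow i) (hc i)
    _ = R * c i := mul_comm _ _

variable {x v z : ι → ℝ}

lemma sum_sum_sq_mul_sq_le_three_mul (hξ0 : ∀ i j, 0 ≤ ξ i j) (hξ : ∀ i j, ξ i j = ξ j i)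
    (hzv : ∀ i, z i * v i = v i ^ 2)
    (hsoc : 2 * ∑ i, ∑ j, ξ i j * ((z i * z j - x i * x j) * v i * v j) ≤
      ∑ i, ∑ j, ξ i j * (v i * x j + x i * v j) ^ 2) :
    ∑ i, ∑ j, ξ i j * (v i ^ 2 * v j ^ 2) ≤ 3 * ∑ i, ∑ j, ξ i j * (v i ^ 2 * x j ^ 2) := by
  have hpt : ∀ i j, 2 * (ξ i j * (v i ^ 2 * v j ^ 2)) - 3 * (ξ i j * (v i ^ 2 * x j ^ 2))
      - 3 * (ξ i j * (v j ^ 2 * x i ^ 2)) ≤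
      2 * (ξ i j * ((z i * z j - x i * x j) * v i * v j)) -
        ξ i j * (v i * x j + x i * v j) ^ 2 := by
    intro i j
    -- `(a + b)² + 2ab ≤ 3 (a² + b²)` for `a = vᵢ xⱼ`, `b = xᵢ vⱼ`
    have hzz : z i * z j * v i * v j = v i ^ 2 * v j ^ 2 := by
      linear_combination (z j * v j) * hzv i + v i ^ 2 * hzv j
    nlinarith [hξ0 i j, mul_nonneg (hξ0 i j) (sq_nonneg (v i * x j - x i * v j))]
  have hsum := sum_le_sum fun i (_ : i ∈ univ) => sum_le_sum fun j (_ : j ∈ univ) => hpt i j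
  simp only [sum_sub_distrib, ← mul_sum] at hsum
  rw [sum_sum_mul_swap hξ fun i j => v i ^ 2 * x j ^ 2] at hsum
  linarith

lemma sum_sum_sq_mul_sq_sub_le (hξ0 : ∀ i j, 0 ≤ ξ i j) (hξ : ∀ i j, ξ i j = ξ j i) {R : ℝ}
    (hrow : ∀ i, ∑ j, ξ i j * z j ^ 2 ≤ R) (hvz : ∀ i, v i ^ 2 ≤ z i ^ 2) :
    ∑ i, ∑ j, ξ i j * (z i ^ 2 * z j ^ 2) - ∑ i, ∑ j, ξ i j * (v i ^ 2 * v j ^ 2) ≤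
      2 * R * ∑ i, (z i ^ 2 - v i ^ 2) := by
  have hgap : ∀ i, 0 ≤ z i ^ 2 - v i ^ 2 := fun i => sub_nonneg.mpr (hvz i)
  have hpt : ∀ i j, ξ i j * (z i ^ 2 * z j ^ 2) - ξ i j * (v i ^ 2 * v j ^ 2) ≤
      ξ i j * ((z i ^ 2 - v i ^ 2) * z j ^ 2) + ξ i j * ((z j ^ 2 - v j ^ 2) * z i ^ 2) := by
    intro i j
    nlinarith [mul_nonneg (hξ0 i j) (mul_nonneg (hgap i) (hgap j))]
  have hsum := sum_le_sum fun i (_ : i ∈ univ) => sum_le_sum fun j (_ : j ∈ univ) => hpt i j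
  simp only [sum_sub_distrib, sum_add_distrib] at hsum
  rw [sum_sum_mul_swap hξ fun i j => (z i ^ 2 - v i ^ 2) * z j ^ 2] at hsum
  linarith [sum_sum_mul_le_of_row_le hrow hgap]

theorem one_eighth_le_sum_sq_of_curvature (hξ0 : ∀ i j, 0 ≤ ξ i j) (hξ : ∀ i j, ξ i j = ξ j i)
    {p : ℝ} (hp : 0 < p) (hrow : ∀ i, ∑ j, ξ i j * z j ^ 2 ≤ 6 / 5 * p)
    (htotal : 9 / 10 * p ≤ ∑ i, ∑ j, ξ i j * (z i ^ 2 * z j ^ 2))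
    (hv : ∀ i, v i = z i ∨ v i = 0) (hgap : ∀ i, z i ^ 2 - v i ^ 2 ≤ x i ^ 2 / 100)
    (hsoc : 2 * ∑ i, ∑ j, ξ i j * ((z i * z j - x i * x j) * v i * v j) ≤
      ∑ i, ∑ j, ξ i j * (v i * x j + x i * v j) ^ 2) :
    1 / 8 ≤ ∑ i, x i ^ 2 := by
  have hzv : ∀ i, z i * v i = v i ^ 2 := fun i => by rcases hv i with h | h <;> rw [h] <;> ring
  have hvz : ∀ i, v i ^ 2 ≤ z i ^ 2 := fun i => by
    rcases hv i with h | h <;> simp [h, sq_nonneg]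
  have hrow' : ∀ i, ∑ j, ξ i j * v j ^ 2 ≤ 6 / 5 * p := fun i =>
    (sum_le_sum fun j _ => mul_le_mul_of_nonneg_left (hvz j) (hξ0 i j)).trans (hrow i)
  have hA : ∑ i, ∑ j, ξ i j * (v i ^ 2 * x j ^ 2) ≤ 6 / 5 * p * ∑ i, x i ^ 2 := by
    rw [← sum_sum_mul_swap hξ]
    simp only [mul_comm (v _ ^ 2) (x _ ^ 2)]
    exact sum_sum_mul_le_of_row_le hrow' fun i => sq_nonneg _
  have hD : ∑ i, (z i ^ 2 - v i ^ 2) ≤ (∑ i, x i ^ 2) / 100 := by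
    rw [sum_div]; exact sum_le_sum fun i _ => hgap i
  have hB := sum_sum_sq_mul_sq_le_three_mul hξ0 hξ hzv hsoc
  have hT := sum_sum_sq_mul_sq_sub_le hξ0 hξ hrow hvz
  nlinarith

end SecondOrder

section Objective

variable {d : ℕ} (ω : Fin d × Fin d → Bool)

lemma projO_apply (A : Matrix (Fin d) (Fin d) ℝ) (i j : Fin d) :
    projO ω A i j = sampleMask ω i j * A i j := by
  rw [projO, sampleMask_mul]

lemma vnorm_sq (x : Fin d → ℝ) : vnorm x ^ 2 = ∑ i, x i ^ 2 :=
  Real.sq_sqrt (sum_nonneg fun i _ => sq_nonneg (x i))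

lemma frobNorm_projO_sq (A : Matrix (Fin d) (Fin d) ℝ) :
    frobNorm (projO ω A) ^ 2 = ∑ i, ∑ j, sampleMask ω i j * A i j ^ 2 := by
  rw [frobNorm, Real.sq_sqrt (by positivity)]
  refine sum_congr rfl fun i _ => sum_congr rfl fun j _ => ?_
  rw [projO_apply, sampleMask_mul, sampleMask_mul]
  split_ifs <;> ring

lemma dotProduct_projO_mulVec (A : Matrix (Fin d) (Fin d) ℝ) (v : Fin d → ℝ) :
    v ⬝ᵥ projO ω A *ᵥ v = ∑ i, ∑ j, sampleMask ω i j * (A i j * v i * v j) := by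
  simp only [dotProduct, mulVec, mul_sum, projO_apply]
  exact sum_congr rfl fun i _ => sum_congr rfl fun j _ => by ring

lemma hessRQuad_eq_zero {α : ℝ} {x v : Fin d → ℝ} (hv : ∀ i, α ≤ |x i| → v i = 0) :
    hessRQuad α x v = 0 :=
  sum_eq_zero fun i _ => by split_ifs with h <;> simp [hv i, h]

theorem one_eighth_le_vnorm_sq_of_secondOrder {z x : Fin d → ℝ} {p α lam : ℝ} (hp : 0 < p)
    (hrow : ∀ i, ∑ j, sampleMask ω i j * z j ^ 2 ≤ 6 / 5 * p)
    (htotal : 9 / 10 * p ≤ ∑ i, ∑ j, sampleMask ω i j * (z i ^ 2 * z j ^ 2))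
    (hzα : ∀ i, 100 * z i ^ 2 ≤ α ^ 2) (hα : 0 ≤ α)
    (hsoc : ∀ v : Fin d → ℝ,
      frobNorm (projO ω (outer v x + outer x v)) ^ 2 + lam * hessRQuad α x v ≥
        2 * (v ⬝ᵥ (projO ω (outer z z - outer x x)).mulVec v)) :
    vnorm x ^ 2 ≥ 1 / 8 := by
  set v : Fin d → ℝ := fun i => if |x i| < α then z i else 0
  have hsocv := hsoc v
  rw [hessRQuad_eq_zero fun i h => if_neg h.not_gt, mul_zero, add_zero, frobNorm_projO_sq,
    dotProduct_projO_mulVec] at hsocv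
  rw [vnorm_sq, ge_iff_le]
  refine one_eighth_le_sum_sq_of_curvature (sampleMask_nonneg ω) (sampleMask_comm ω) hp hrow
    htotal (fun i => ?_) (fun i => ?_) hsocv
  · by_cases h : |x i| < α <;> simp [v, h]
  · by_cases h : |x i| < α
    · simp [v, h]; positivity
    · have hx : α ^ 2 ≤ x i ^ 2 := by
        rw [← sq_abs (x i)]; exact pow_le_pow_left₀ hα (not_lt.mp h) 2
      simp only [v, h, if_false]
      linarith [hzα i]

end Objective

section Parameters

lemma sq_le_of_abs_le_div_sqrt {a μ : ℝ} {d : ℕ} (h : |a| ≤ μ / √d) : a ^ 2 ≤ μ ^ 2 / d := by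
  calc a ^ 2 = |a| ^ 2 := (sq_abs a).symm
    _ ≤ (μ / √d) ^ 2 := pow_le_pow_left₀ (abs_nonneg a) h 2
    _ = μ ^ 2 / d := by rw [div_pow, Real.sq_sqrt d.cast_nonneg]

lemma one_le_of_sum_sq_eq_one {d : ℕ} (hd : 0 < d) {z : Fin d → ℝ} {μ : ℝ} (hμ : 0 < μ)
    (hz1 : ∑ i, z i ^ 2 = 1) (hz : ∀ i, z i ^ 2 ≤ μ ^ 2 / d) : 1 ≤ μ := by
  have hμ2 : 1 ≤ μ ^ 2 := by
    calc 1 = ∑ i, z i ^ 2 := hz1.symm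
      _ ≤ ∑ _i : Fin d, μ ^ 2 / d := sum_le_sum fun i _ => hz i
      _ = μ ^ 2 := by
        rw [sum_const, card_univ, Fintype.card_fin, nsmul_eq_mul]
        exact mul_div_cancel₀ _ (by positivity)
  nlinarith

lemma exp_neg_le_inv_of_log_le {a s : ℝ} (ha : 0 < a) (h : log a ≤ s) : exp (-s) ≤ a⁻¹ := by
  rw [exp_neg]; exact inv_anti₀ ha ((log_le_iff_le_exp ha).mp h)

lemma half_log_le_log_rpow_three_halves {x : ℝ} (hx : 2 ≤ x) :
    log x / 2 ≤ log x ^ ((3 : ℝ) / 2) := by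
  have hlog : 1 / 4 ≤ log x :=
    le_trans (by linarith [log_two_gt_d9]) (log_le_log (by norm_num) hx)
  have hsqrt : 1 / 2 ≤ √(log x) := Real.le_sqrt_of_sq_le (by linarith)
  rw [show (3 : ℝ) / 2 = 1 / 2 + 1 by norm_num, rpow_add (by linarith), rpow_one, ← sqrt_eq_rpow]
  nlinarith

lemma sampling_tails_le_inv {d : ℕ} {μ p : ℝ} (hd : 2 ≤ d) (hμ : 1 ≤ μ)
    (hp : 2000 * μ ^ 6 * log d ^ ((3 : ℝ) / 2) / d ≤ p) :
    d * exp (-(p / (200 * (μ ^ 2 / d)))) + exp (-(p / (800 * (μ ^ 2 / d) ^ 2))) ≤ 1 / d := by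
  have hd2 : (2 : ℝ) ≤ d := by exact_mod_cast hd
  have hlog2 : log 2 ≤ log d := log_le_log (by norm_num) hd2
  have hlog0 : 0 ≤ log (d : ℝ) := by linarith [log_two_gt_d9]
  have hpd : 1000 * μ ^ 6 * log d ≤ p * d := by
    have hL := mul_le_mul_of_nonneg_left (half_log_le_log_rpow_three_halves hd2)
      (by positivity : (0 : ℝ) ≤ 2000 * μ ^ 6)
    linarith [(div_le_iff₀ (by positivity)).mp hp]
  have hμ2 : μ ^ 2 ≤ μ ^ 6 := pow_le_pow_right₀ hμ (by norm_num)
  have hμ4 : μ ^ 4 ≤ μ ^ 6 := pow_le_pow_right₀ hμ (by norm_num)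
  have hrow : exp (-(p / (200 * (μ ^ 2 / d)))) ≤ (2 * (d : ℝ) ^ 2)⁻¹ := by
    refine exp_neg_le_inv_of_log_le (by positivity) ?_
    rw [log_mul (by norm_num) (by positivity), log_pow,
      show p / (200 * (μ ^ 2 / d)) = p * d / (200 * μ ^ 2) by field_simp,
      le_div_iff₀ (by positivity)]
    push_cast
    nlinarith [mul_le_mul_of_nonneg_right hμ2 hlog0, mul_le_mul_of_nonneg_left hlog2 (sq_nonneg μ)]
  have htotal : exp (-(p / (800 * (μ ^ 2 / d) ^ 2))) ≤ (2 * (d : ℝ))⁻¹ := by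
    refine exp_neg_le_inv_of_log_le (by positivity) ?_
    rw [log_mul (by norm_num) (by positivity),
      show p / (800 * (μ ^ 2 / d) ^ 2) = p * d * d / (800 * μ ^ 4) by field_simp,
      le_div_iff₀ (by positivity)]
    have hpd2 : 1000 * μ ^ 6 * log d * 2 ≤ p * d * d :=
      (mul_le_mul_of_nonneg_left hd2 (by positivity)).trans
        (mul_le_mul_of_nonneg_right hpd (by positivity))
    nlinarith [mul_le_mul_of_nonneg_right hμ4 hlog0,
      mul_le_mul_of_nonneg_left hlog2 (pow_nonneg (sq_nonneg μ) 2)]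
  calc d * exp (-(p / (200 * (μ ^ 2 / d)))) + exp (-(p / (800 * (μ ^ 2 / d) ^ 2)))
      ≤ d * (2 * (d : ℝ) ^ 2)⁻¹ + (2 * (d : ℝ))⁻¹ := by gcongr
    _ = 1 / d := by field_simp; ring

end Parameters

end MatrixCompletion

open MatrixCompletion

/-- there is an absolute constant `c` such that if
`p ≥ c μ⁶ log^{1.5} d / d`, `α = 10μ/√d` and `λ ≥ μ²p/α²`, then with probability at
least `1 − 1/d` over `Ω`, every `x` with `‖x‖_∞ ≤ 4α` satisfying the second-order
optimality condition has `‖x‖₂² ≥ 1/8`. -/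
theorem stmt9 :
    ∃ c : ℝ, 0 < c ∧
      ∀ (d : ℕ), 0 < d →
      ∀ (μ p lam α : ℝ) (z : Fin d → ℝ),
        0 < μ → 0 < p → ∀ (hp1 : p ≤ 1),
        vnorm z = 1 → (∀ i, |z i| ≤ μ / Real.sqrt d) →
        c * μ ^ 6 * Real.log d ^ ((3 : ℝ) / 2) / d ≤ p →
        α = 10 * μ / Real.sqrt d →
        μ ^ 2 * p / α ^ 2 ≤ lam →
        1 - 1 / (d : ENNReal) ≤
          omegaMeasure d p hp1
            {ω | ∀ x : Fin d → ℝ,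
              (∀ i, |x i| ≤ 4 * α) →
              (∀ v : Fin d → ℝ,
                frobNorm (projO ω (outer v x + outer x v)) ^ 2 + lam * hessRQuad α x v ≥
                  2 * (v ⬝ᵥ (projO ω (outer z z - outer x x)).mulVec v)) →
              vnorm x ^ 2 ≥ 1 / 8} := by
  refine ⟨2000, by norm_num, fun d hd μ p lam α z hμ hp hp1 hz hzμ hpc hα _ => ?_⟩
  rcases (show d = 1 ∨ 2 ≤ d by omega) with rfl | hd2
  · simp
  have hd0 : (0 : ℝ) < d := by positivity
  have hz1 : ∑ i, z i ^ 2 = 1 := Real.sqrt_eq_one.mp hz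
  have hzW : ∀ i, z i ^ 2 ≤ μ ^ 2 / d := fun i => sq_le_of_abs_le_div_sqrt (hzμ i)
  have hgood := one_sub_le_bernoulliPi_real_goodSample (hp1 := hp1) hp.le hz1 hzW (by positivity)
  rw [Fintype.card_fin] at hgood
  have htails := sampling_tails_le_inv hd2 (one_le_of_sum_sq_eq_one hd hμ hz1 hzW) hpc
  have hα2 : α ^ 2 = 100 * (μ ^ 2 / d) := by
    rw [hα, div_pow, mul_pow, Real.sq_sqrt hd0.le]; ring
  calc 1 - 1 / (d : ENNReal) = ENNReal.ofReal (1 - 1 / d) := by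
        rw [ENNReal.ofReal_sub _ (by positivity), ENNReal.ofReal_one,
          ENNReal.ofReal_div_of_pos hd0, ENNReal.ofReal_one, ENNReal.ofReal_natCast]
    _ ≤ ENNReal.ofReal ((bernoulliPi (Fin d × Fin d) p hp1).real (goodSample p z)) :=
        ENNReal.ofReal_le_ofReal (hgood.trans' (by linarith))
    _ = bernoulliPi (Fin d × Fin d) p hp1 (goodSample p z) := ofReal_measureReal
    _ ≤ omegaMeasure d p hp1 _ := by
      refine measure_mono fun ω hω x _ hsoc => ?_
      exact one_eighth_le_vnorm_sq_of_secondOrder ω hp (fun i => (hω.1 i).le) hω.2.le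
        (fun i => by rw [hα2]; linarith [hzW i]) (by rw [hα]; positivity) hsoc
end
end

section
/- Let Z ∈ ℝ^{d×r} with ‖Z‖_F ≤ √r and M = ZZᵀ, and suppose X ∈ ℝ^{d×r} satisfies ‖XXᵀ − M‖_F = ε with ε ≤ σ_min(Z)²/100. Then there exists U ∈ ℝ^{d×r} with UUᵀ = M and ‖X − U‖_F ≤ 5ε√r/σ_min(Z)². -/
/-!
Let `σ = smin Z > 0`, let `P = Z (Zᵀ Z)⁻¹ Zᵀ` be the orthogonal projection onto the column space
of `Z`, and split `X = Z B + N` with `Z B = P X`. Compressing the residual `R = X Xᵀ - Z Zᵀ` gives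
`P R P = Z (B Bᵀ - 1) Zᵀ` and `P R (1 - P) = Z B Nᵀ`, both of Frobenius norm at most `ε`; since
`‖Z M‖ ≥ σ ‖M‖`, this yields `‖B Bᵀ - 1‖ ≤ ε / σ²` and `‖B Nᵀ‖ ≤ ε / σ`. The polar factor
`Q = (B Bᵀ)^(-1/2) B` is orthogonal with `‖B - Q‖ ≤ ‖B Bᵀ - 1‖ ≤ 1/100`, so `‖N‖ ≤ 2ε / σ`, and
`U = Z Q` satisfies `U Uᵀ = Z Zᵀ` and `‖X - U‖ ≤ ‖N‖ + ‖Z‖ ‖B - Q‖ ≤ 3ε√r / σ²`, using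
`σ ≤ ‖Z‖ ≤ √r`.
-/

open Matrix Finset

noncomputable section

/-- Smallest singular value, via the variational characterization. -/
def smin {m n : ℕ} (A : Matrix (Fin m) (Fin n) ℝ) : ℝ :=
  sInf {t | ∃ v : Fin n → ℝ, vnorm v = 1 ∧ t = vnorm (A.mulVec v)}

attribute [local instance] Matrix.frobeniusNormedAddCommGroup

namespace GramPerturbation

variable {l m n : ℕ}

lemma vnorm_eq_norm (v : Fin n → ℝ) : vnorm v = ‖WithLp.toLp 2 v‖ := by
  simp [vnorm, EuclideanSpace.norm_eq]

lemma frobNorm_eq_norm (A : Matrix (Fin m) (Fin n) ℝ) : frobNorm A = ‖A‖ := by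
  simp [frobNorm, Matrix.frobenius_norm_def, Real.sqrt_eq_rpow]

lemma norm_sq_eq_trace (A : Matrix (Fin m) (Fin n) ℝ) : ‖A‖ ^ 2 = (Aᵀ * A).trace := by
  rw [← frobNorm_eq_norm, frobNorm, Real.sq_sqrt (by positivity), Finset.sum_comm]
  simp [Matrix.trace, Matrix.mul_apply, sq]

lemma norm_mulVec_le (A : Matrix (Fin m) (Fin n) ℝ) (v : Fin n → ℝ) :
    ‖WithLp.toLp 2 (A *ᵥ v)‖ ≤ ‖A‖ * ‖WithLp.toLp 2 v‖ := by
  simpa only [← Matrix.frobenius_norm_replicateCol (ι := Unit), Matrix.replicateCol_mulVec]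
    using Matrix.frobenius_norm_mul A (Matrix.replicateCol Unit v)

lemma transpose_eq_of_isSelfAdjoint {P : Matrix (Fin n) (Fin n) ℝ} (hP : IsSelfAdjoint P) :
    Pᵀ = P := by
  rw [← Matrix.conjTranspose_eq_transpose_of_trivial]; exact hP

lemma norm_mul_le_of_isStarProjection {P : Matrix (Fin m) (Fin m) ℝ} (hP : IsStarProjection P)
    (A : Matrix (Fin m) (Fin n) ℝ) : ‖P * A‖ ≤ ‖A‖ := by
  have hPt := transpose_eq_of_isSelfAdjoint hP.isSelfAdjoint
  have hQt := transpose_eq_of_isSelfAdjoint hP.one_sub.isSelfAdjoint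
  have hsplit : ‖A‖ ^ 2 = ‖P * A‖ ^ 2 + ‖(1 - P) * A‖ ^ 2 := by
    simp only [norm_sq_eq_trace, ← Matrix.trace_add, Matrix.transpose_mul, hPt, hQt]
    rw [Matrix.mul_assoc, ← Matrix.mul_assoc P, hP.isIdempotentElem.eq, Matrix.mul_assoc _ (1 - P),
      ← Matrix.mul_assoc (1 - P), hP.one_sub.isIdempotentElem.eq, ← Matrix.mul_add,
      ← Matrix.add_mul, add_sub_cancel, Matrix.one_mul]
  exact pow_le_pow_iff_left₀ (norm_nonneg _) (norm_nonneg _) two_ne_zero |>.1 (by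
    rw [hsplit]; exact le_add_of_nonneg_right (sq_nonneg _))

lemma norm_mul_mul_le_of_isStarProjection {P P' : Matrix (Fin m) (Fin m) ℝ}
    (hP : IsStarProjection P) (hP' : IsStarProjection P') (A : Matrix (Fin m) (Fin m) ℝ) :
    ‖P * A * P'‖ ≤ ‖A‖ := by
  calc ‖P * A * P'‖ ≤ ‖A * P'‖ := by
        rw [Matrix.mul_assoc]; exact norm_mul_le_of_isStarProjection hP _
    _ = ‖P' * Aᵀ‖ := by
      rw [← Matrix.frobenius_norm_transpose, Matrix.transpose_mul,
        transpose_eq_of_isSelfAdjoint hP'.isSelfAdjoint]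
    _ ≤ ‖A‖ := (norm_mul_le_of_isStarProjection hP' _).trans_eq (Matrix.frobenius_norm_transpose A)

lemma norm_mul_of_transpose_mul_eq_one {Q : Matrix (Fin m) (Fin m) ℝ} (hQ : Qᵀ * Q = 1)
    (A : Matrix (Fin m) (Fin n) ℝ) : ‖Q * A‖ = ‖A‖ := by
  refine (pow_left_inj₀ (norm_nonneg _) (norm_nonneg _) two_ne_zero).1 ?_
  simp only [norm_sq_eq_trace, Matrix.transpose_mul, Matrix.mul_assoc, ← Matrix.mul_assoc Qᵀ,
    hQ, Matrix.one_mul]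

lemma norm_sub_one_le_of_posSemidef {S : Matrix (Fin n) (Fin n) ℝ} (hS : S.PosSemidef) :
    ‖S - 1‖ ≤ ‖S * S - 1‖ := by
  have hSt : Sᵀ = S := transpose_eq_of_isSelfAdjoint hS.1
  have hR : (S * S + S + S).PosSemidef := by
    have := Matrix.posSemidef_conjTranspose_mul_self S
    rw [hS.1] at this
    exact (this.add hS).add hS
  -- `S² - 1 = (S - 1)(S + 1)` and `(S + 1)² = 1 + (S² + 2S)` with `S² + 2S ⪰ 0`
  have hsplit : ‖S * S - 1‖ ^ 2 = ‖S - 1‖ ^ 2 + ((S - 1)ᴴ * (S * S + S + S) * (S - 1)).trace := by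
    simp only [norm_sq_eq_trace, ← Matrix.trace_add, Matrix.conjTranspose_eq_transpose_of_trivial,
      Matrix.transpose_sub, Matrix.transpose_mul, Matrix.transpose_one, hSt]
    congr 1
    noncomm_ring
  refine pow_le_pow_iff_left₀ (norm_nonneg _) (norm_nonneg _) two_ne_zero |>.1 ?_
  rw [hsplit]
  exact le_add_of_nonneg_right (hR.conjTranspose_mul_mul_same _).trace_nonneg

lemma isUnit_of_norm_sub_one_lt_one {S : Matrix (Fin n) (Fin n) ℝ} (h : ‖S - 1‖ < 1) :
    IsUnit S := by
  let _ : NormedRing (Matrix (Fin n) (Fin n) ℝ) := Matrix.frobeniusNormedRing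
  let _ : NormedSpace ℝ (Matrix (Fin n) (Fin n) ℝ) := Matrix.frobeniusNormedSpace
  have _ : CompleteSpace (Matrix (Fin n) (Fin n) ℝ) := FiniteDimensional.complete ℝ _
  exact sub_sub_cancel 1 S ▸ (Units.oneSub (1 - S) (norm_sub_rev S 1 ▸ h)).isUnit

open scoped MatrixOrder in
lemma exists_transpose_mul_eq_one_norm_sub_le {B : Matrix (Fin n) (Fin n) ℝ}
    (hB : ‖B * Bᵀ - 1‖ < 1) :
    ∃ Q : Matrix (Fin n) (Fin n) ℝ, Qᵀ * Q = 1 ∧ ‖B - Q‖ ≤ ‖B * Bᵀ - 1‖ := by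
  have hBB : 0 ≤ B * Bᵀ := by
    simpa [Matrix.conjTranspose_eq_transpose_of_trivial] using
      (Matrix.posSemidef_self_mul_conjTranspose B).nonneg
  set S := CFC.sqrt (B * Bᵀ)
  have hSS : S * S = B * Bᵀ := CFC.sqrt_mul_sqrt_self _ hBB
  have hS : S.PosSemidef := (CFC.sqrt_nonneg _).posSemidef
  have hS1 : ‖S - 1‖ ≤ ‖B * Bᵀ - 1‖ := hSS ▸ norm_sub_one_le_of_posSemidef hS
  have hSdet : IsUnit S.det :=
    (Matrix.isUnit_iff_isUnit_det S).1 (isUnit_of_norm_sub_one_lt_one (hS1.trans_lt hB))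
  -- polar decomposition `B = S Q`
  set Q := S⁻¹ * B
  have hQ : Q * Qᵀ = 1 := by
    rw [Matrix.transpose_mul, Matrix.transpose_nonsing_inv, transpose_eq_of_isSelfAdjoint hS.1,
      Matrix.mul_assoc, ← Matrix.mul_assoc B, ← hSS, Matrix.mul_assoc,
      Matrix.mul_nonsing_inv _ hSdet, Matrix.mul_one, Matrix.nonsing_inv_mul _ hSdet]
  have hBQ : B - Q = (S - 1) * Q := by
    rw [Matrix.sub_mul, Matrix.one_mul, ← Matrix.mul_assoc, Matrix.mul_nonsing_inv _ hSdet,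
      Matrix.one_mul]
  refine ⟨Q, mul_eq_one_comm.1 hQ, ?_⟩
  calc ‖B - Q‖ = ‖Qᵀ * (S - 1)ᵀ‖ := by
        rw [hBQ, ← Matrix.transpose_mul, Matrix.frobenius_norm_transpose]
    _ = ‖S - 1‖ := by
        rw [norm_mul_of_transpose_mul_eq_one (by rwa [Matrix.transpose_transpose]),
          Matrix.frobenius_norm_transpose]
    _ ≤ ‖B * Bᵀ - 1‖ := hS1

lemma one_sub_norm_sub_mul_le_norm_mul {B Q : Matrix (Fin m) (Fin m) ℝ} (hQ : Qᵀ * Q = 1)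
    (A : Matrix (Fin m) (Fin n) ℝ) : (1 - ‖B - Q‖) * ‖A‖ ≤ ‖B * A‖ := by
  have h := norm_sub_le (B * A) ((B - Q) * A)
  rw [← Matrix.sub_mul, sub_sub_cancel, norm_mul_of_transpose_mul_eq_one hQ] at h
  linarith [Matrix.frobenius_norm_mul (B - Q) A]

lemma smin_nonneg (A : Matrix (Fin m) (Fin n) ℝ) : 0 ≤ smin A :=
  Real.sInf_nonneg (by rintro _ ⟨v, -, rfl⟩; exact Real.sqrt_nonneg _)

lemma smin_le_vnorm_mulVec (A : Matrix (Fin m) (Fin n) ℝ) {v : Fin n → ℝ} (hv : vnorm v = 1) :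
    smin A ≤ vnorm (A *ᵥ v) :=
  csInf_le ⟨0, by rintro _ ⟨v, -, rfl⟩; exact Real.sqrt_nonneg _⟩ ⟨v, hv, rfl⟩

lemma smin_mul_vnorm_le (A : Matrix (Fin m) (Fin n) ℝ) (v : Fin n → ℝ) :
    smin A * vnorm v ≤ vnorm (A *ᵥ v) := by
  rcases eq_or_ne v 0 with rfl | hv
  · simp [vnorm]
  have hc : 0 < vnorm v := by
    rw [vnorm_eq_norm]; exact norm_pos_iff.2 (by simpa using hv)
  have hu : vnorm ((vnorm v)⁻¹ • v) = 1 := by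
    rw [vnorm_eq_norm, WithLp.toLp_smul, norm_smul, ← vnorm_eq_norm, Real.norm_eq_abs,
      abs_inv, abs_of_pos hc, inv_mul_cancel₀ hc.ne']
  have := smin_le_vnorm_mulVec A hu
  rwa [Matrix.mulVec_smul, vnorm_eq_norm, WithLp.toLp_smul, norm_smul, ← vnorm_eq_norm,
    Real.norm_eq_abs, abs_inv, abs_of_pos hc, le_inv_mul_iff₀ hc, mul_comm] at this

lemma smin_le_norm (A : Matrix (Fin m) (Fin n) ℝ) : smin A ≤ ‖A‖ := by
  rcases Set.eq_empty_or_nonempty {t | ∃ v : Fin n → ℝ, vnorm v = 1 ∧ t = vnorm (A *ᵥ v)}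
    with h | ⟨_, v, hv, -⟩
  · rw [smin, h, Real.sInf_empty]; exact norm_nonneg _
  calc smin A ≤ vnorm (A *ᵥ v) := smin_le_vnorm_mulVec A hv
    _ ≤ ‖A‖ * vnorm v := by rw [vnorm_eq_norm, vnorm_eq_norm]; exact norm_mulVec_le A v
    _ = ‖A‖ := by rw [hv, mul_one]

lemma norm_sq_eq_sum_vnorm_sq (M : Matrix (Fin m) (Fin n) ℝ) :
    ‖M‖ ^ 2 = ∑ j, vnorm (Mᵀ j) ^ 2 := by
  rw [← frobNorm_eq_norm, frobNorm, Real.sq_sqrt (by positivity), Finset.sum_comm]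
  exact Finset.sum_congr rfl fun j _ => (Real.sq_sqrt (by positivity)).symm

lemma smin_mul_norm_le (A : Matrix (Fin l) (Fin m) ℝ) (M : Matrix (Fin m) (Fin n) ℝ) :
    smin A * ‖M‖ ≤ ‖A * M‖ := by
  refine pow_le_pow_iff_left₀ (mul_nonneg (smin_nonneg A) (norm_nonneg _)) (norm_nonneg _)
    two_ne_zero |>.1 ?_
  rw [mul_pow, norm_sq_eq_sum_vnorm_sq, norm_sq_eq_sum_vnorm_sq, Finset.mul_sum]
  refine Finset.sum_le_sum fun j _ => ?_
  rw [← mul_pow]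
  exact pow_le_pow_left₀ (mul_nonneg (smin_nonneg A) (Real.sqrt_nonneg _))
    (smin_mul_vnorm_le A (Mᵀ j)) 2

lemma smin_sq_mul_norm_le (A : Matrix (Fin l) (Fin m) ℝ) {M : Matrix (Fin m) (Fin m) ℝ}
    (hM : Mᵀ = M) : smin A ^ 2 * ‖M‖ ≤ ‖A * M * Aᵀ‖ := by
  calc smin A ^ 2 * ‖M‖ ≤ smin A * ‖A * M‖ := by
        rw [sq, mul_assoc]; exact mul_le_mul_of_nonneg_left (smin_mul_norm_le A M) (smin_nonneg A)
    _ = smin A * ‖M * Aᵀ‖ := by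
        rw [← Matrix.frobenius_norm_transpose (A * M), Matrix.transpose_mul, hM]
    _ ≤ ‖A * M * Aᵀ‖ := by rw [Matrix.mul_assoc]; exact smin_mul_norm_le A _

lemma isUnit_det_transpose_mul_self {A : Matrix (Fin m) (Fin n) ℝ} (hA : 0 < smin A) :
    IsUnit (Aᵀ * A).det := by
  have hinj : Function.Injective A.mulVec := by
    intro v w h
    have := smin_mul_vnorm_le A (v - w)
    rw [Matrix.mulVec_sub, h, sub_self, vnorm_eq_norm, vnorm_eq_norm] at this
    simp only [WithLp.toLp_zero, norm_zero] at this
    have : ‖WithLp.toLp 2 (v - w)‖ = 0 :=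
      le_antisymm (nonpos_of_mul_nonpos_right this hA) (norm_nonneg _)
    simpa [sub_eq_zero] using this
  have := (Matrix.PosDef.conjTranspose_mul_self A hinj).det_pos
  rw [Matrix.conjTranspose_eq_transpose_of_trivial] at this
  exact isUnit_iff_ne_zero.2 this.ne'

lemma isStarProjection_mul_inv_mul_transpose {Z : Matrix (Fin m) (Fin n) ℝ}
    (hZ : IsUnit (Zᵀ * Z).det) : IsStarProjection (Z * (Zᵀ * Z)⁻¹ * Zᵀ) := by
  refine ⟨?_, ?_⟩
  · change _ * _ = _
    simp only [Matrix.mul_assoc]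
    rw [← Matrix.mul_assoc Zᵀ Z, ← Matrix.mul_assoc (Zᵀ * Z)⁻¹, Matrix.nonsing_inv_mul _ hZ,
      Matrix.one_mul]
  · simp only [IsSelfAdjoint, Matrix.star_eq_conjTranspose,
      Matrix.conjTranspose_eq_transpose_of_trivial, Matrix.transpose_mul,
      Matrix.transpose_nonsing_inv, Matrix.transpose_transpose, Matrix.mul_assoc]

lemma mul_gram_sub_mul_transpose (P P' : Matrix (Fin m) (Fin m) ℝ)
    (X Z : Matrix (Fin m) (Fin n) ℝ) :
    P * (X * Xᵀ - Z * Zᵀ) * P'ᵀ = P * X * (P' * X)ᵀ - P * Z * (P' * Z)ᵀ := by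
  simp only [Matrix.transpose_mul, Matrix.mul_sub, Matrix.sub_mul, Matrix.mul_assoc]

lemma exists_eq_mul_add_of_smin_pos {Z : Matrix (Fin m) (Fin n) ℝ} (hZ : 0 < smin Z)
    (X : Matrix (Fin m) (Fin n) ℝ) :
    ∃ B : Matrix (Fin n) (Fin n) ℝ, ∃ N : Matrix (Fin m) (Fin n) ℝ, X = Z * B + N ∧
      smin Z ^ 2 * ‖B * Bᵀ - 1‖ ≤ ‖X * Xᵀ - Z * Zᵀ‖ ∧
      smin Z * ‖B * Nᵀ‖ ≤ ‖X * Xᵀ - Z * Zᵀ‖ := by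
  have hG := isUnit_det_transpose_mul_self hZ
  set P := Z * (Zᵀ * Z)⁻¹ * Zᵀ
  have hP : IsStarProjection P := isStarProjection_mul_inv_mul_transpose hG
  set B := (Zᵀ * Z)⁻¹ * Zᵀ * X
  have hPZ : P * Z = Z := by
    rw [Matrix.mul_assoc, Matrix.mul_assoc, Matrix.nonsing_inv_mul _ hG, Matrix.mul_one]
  have hPX : P * X = Z * B := by simp only [P, B, Matrix.mul_assoc]
  have hQZ : (1 - P) * Z = 0 := by rw [Matrix.sub_mul, hPZ, Matrix.one_mul, sub_self]
  have hPt : Pᵀ = P := transpose_eq_of_isSelfAdjoint hP.isSelfAdjoint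
  have hQt : (1 - P)ᵀ = 1 - P := transpose_eq_of_isSelfAdjoint hP.one_sub.isSelfAdjoint
  refine ⟨B, (1 - P) * X, by rw [Matrix.sub_mul, Matrix.one_mul, hPX, add_sub_cancel], ?_, ?_⟩
  · have hsym : (B * Bᵀ - 1)ᵀ = B * Bᵀ - 1 := by
      rw [Matrix.transpose_sub, Matrix.transpose_mul, Matrix.transpose_transpose,
        Matrix.transpose_one]
    calc smin Z ^ 2 * ‖B * Bᵀ - 1‖ ≤ ‖Z * (B * Bᵀ - 1) * Zᵀ‖ := smin_sq_mul_norm_le Z hsym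
      _ = ‖P * (X * Xᵀ - Z * Zᵀ) * Pᵀ‖ := by
        rw [mul_gram_sub_mul_transpose, hPX, hPZ]
        simp only [Matrix.transpose_mul, Matrix.mul_sub, Matrix.sub_mul, Matrix.mul_one,
          Matrix.mul_assoc]
      _ ≤ ‖X * Xᵀ - Z * Zᵀ‖ := by
        rw [hPt]; exact norm_mul_mul_le_of_isStarProjection hP hP _
  · calc smin Z * ‖B * ((1 - P) * X)ᵀ‖ ≤ ‖Z * (B * ((1 - P) * X)ᵀ)‖ := smin_mul_norm_le Z _
      _ = ‖P * (X * Xᵀ - Z * Zᵀ) * (1 - P)ᵀ‖ := by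
        rw [mul_gram_sub_mul_transpose, hPX, hQZ, Matrix.transpose_zero, Matrix.mul_zero,
          sub_zero, Matrix.mul_assoc Z B]
      _ ≤ ‖X * Xᵀ - Z * Zᵀ‖ := by
        rw [hQt]; exact norm_mul_mul_le_of_isStarProjection hP hP.one_sub _

end GramPerturbation

open GramPerturbation

theorem stmt18_general (d r : ℕ)
    (Z X : Matrix (Fin d) (Fin r) ℝ) (hZF : frobNorm Z ≤ Real.sqrt r)
    (ε : ℝ) (hε : frobNorm (X * Xᵀ - Z * Zᵀ) = ε) (hεs : ε ≤ smin Z ^ 2 / 100) :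
    ∃ U : Matrix (Fin d) (Fin r) ℝ,
      U * Uᵀ = Z * Zᵀ ∧ frobNorm (X - U) ≤ 5 * ε * Real.sqrt r / smin Z ^ 2 := by
  simp only [frobNorm_eq_norm] at hZF hε ⊢
  have hε0 : 0 ≤ ε := hε ▸ norm_nonneg _
  rcases (smin_nonneg Z).eq_or_lt with hσ | hσ
  · have hR : ‖X * Xᵀ - Z * Zᵀ‖ = 0 := by rw [← hσ] at hεs; linarith
    exact ⟨X, sub_eq_zero.1 (norm_eq_zero.1 hR), by rw [sub_self, norm_zero, ← hσ]; simp⟩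
  set σ := smin Z
  obtain ⟨B, N, rfl, hBB, hBN⟩ := exists_eq_mul_add_of_smin_pos hσ X
  have hδ : ‖B * Bᵀ - 1‖ ≤ ε / σ ^ 2 := by rw [le_div_iff₀ (by positivity)]; linarith
  have hδ1 : ε / σ ^ 2 ≤ 1 / 100 := by rw [div_le_iff₀ (by positivity)]; linarith
  obtain ⟨Q, hQ, hBQ⟩ := exists_transpose_mul_eq_one_norm_sub_le (hδ.trans_lt (by linarith))
  have hN := one_sub_norm_sub_mul_le_norm_mul (B := B) hQ Nᵀ
  rw [Matrix.frobenius_norm_transpose] at hN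
  refine ⟨Z * Q, ?_, ?_⟩
  · rw [Matrix.transpose_mul, Matrix.mul_assoc, ← Matrix.mul_assoc Q, mul_eq_one_comm.1 hQ,
      Matrix.one_mul]
  have hNε : ‖N‖ ≤ 2 * ε / σ := by
    rw [le_div_iff₀ hσ]; nlinarith [norm_nonneg N]
  have hσr : σ ≤ √r := (smin_le_norm Z).trans hZF
  calc ‖Z * B + N - Z * Q‖ = ‖N + Z * (B - Q)‖ := by rw [Matrix.mul_sub, add_comm, add_sub_assoc]
    _ ≤ ‖N‖ + ‖Z‖ * ‖B - Q‖ := by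
        grw [norm_add_le, Matrix.frobenius_norm_mul]
    _ ≤ 2 * ε * σ / σ ^ 2 + √r * (ε / σ ^ 2) := by
        gcongr
        · rwa [sq, ← div_div, mul_div_cancel_right₀ _ hσ.ne']
        · exact hBQ.trans hδ
    _ ≤ 5 * ε * √r / σ ^ 2 := by
        rw [mul_div_assoc', ← add_div]
        gcongr
        nlinarith [Real.sqrt_nonneg r]

/-- if `‖Z‖_F ≤ √r` and `‖XXᵀ − ZZᵀ‖_F = ε ≤ σ_min(Z)²/100`, then there
is a `U` with `UUᵀ = ZZᵀ` and `‖X − U‖_F ≤ 5ε√r/σ_min(Z)²`. -/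
theorem stmt18 (d r : ℕ) (hd : 0 < d) (hr : 0 < r)
    (Z X : Matrix (Fin d) (Fin r) ℝ) (hZF : frobNorm Z ≤ Real.sqrt r)
    (ε : ℝ) (hε : frobNorm (X * Xᵀ - Z * Zᵀ) = ε) (hεs : ε ≤ smin Z ^ 2 / 100) :
    ∃ U : Matrix (Fin d) (Fin r) ℝ,
      U * Uᵀ = Z * Zᵀ ∧ frobNorm (X - U) ≤ 5 * ε * Real.sqrt r / smin Z ^ 2 :=
  stmt18_general d r Z X hZF ε hε hεs
end
end
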